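/- arXiv:1507.06213 — 9 statements merged into one kernel-verified Lean document; each statement's English description precedes it below -/
import Mathlib

section
/- Let K be a field and n ≥ 2. Let A be an n×n alternating matrix over K, written in block form A = [[P, C₀],[−C₀ᵀ, 0]] with P an (n-1)×(n-1) alternating matrix and C₀ ∈ K^{n-1}. Let C ∈ K^{n-1} and set N = [[0_{(n-1)×(n-1)}, C],[−Cᵀ, 0]]. If A + t·N is singular for every t ∈ K, then Cᵀ · P^ad · C = 0, where P^ad denotes the adjugate (classical adjoint) of P. -/
/-!
Since `A + t • N` is the bordered matrix `[[P, C₀ + t C], [-(C₀ + t C)ᵀ, 0]]`, expanding its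
determinant along the border gives `det (A + t • N) = q (C₀ + t C)` with `q X = Xᵀ Pᵃᵈ X`.
So `q` vanishes on the whole line `C₀ + K C`, and comparing `t = 0, 1, -1` kills the leading
coefficient `q C` unless `2 = 0`. In characteristic `2` the alternating matrix `P` is
symmetric, hence so is `Pᵃᵈ`, the linear coefficient `2 C₀ᵀ Pᵃᵈ C` vanishes, and
`t = 0, 1` suffice.
-/

open Matrix

namespace Matrix

variable {m R : Type*} [Fintype m] [CommRing R]

theorem transpose_eq_neg_of_forall_dotProduct_mulVec_self_eq_zero [DecidableEq m]
    {A : Matrix m m R} (hA : ∀ x : m → R, x ⬝ᵥ A *ᵥ x = 0) : Aᵀ = -A := by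
  have hsingle (i j : m) : Pi.single i 1 ⬝ᵥ A *ᵥ Pi.single j 1 = A i j := by
    simp
  ext i j
  have hpolar := hA (Pi.single i 1 + Pi.single j 1)
  simp only [add_dotProduct, dotProduct_add, mulVec_add, hsingle] at hpolar
  have hdiag (k : m) : A k k = 0 := hsingle k k ▸ hA (Pi.single k 1)
  rw [transpose_apply, neg_apply]
  linear_combination hpolar - hdiag i - hdiag j

theorem isSymm_of_two_eq_zero_of_forall_dotProduct_mulVec_self_eq_zero [DecidableEq m]
    {A : Matrix m m R} (h2 : (2 : R) = 0) (hA : ∀ x : m → R, x ⬝ᵥ A *ᵥ x = 0) :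
    A.IsSymm := by
  rw [IsSymm, transpose_eq_neg_of_forall_dotProduct_mulVec_self_eq_zero hA]
  exact neg_eq_of_add_eq_zero_left (by rw [← two_smul R A, h2, zero_smul])

theorem dotProduct_mulVec_comm_of_isSymm {A : Matrix m m R} (hA : A.IsSymm) (x y : m → R) :
    x ⬝ᵥ A *ᵥ y = y ⬝ᵥ A *ᵥ x := by
  rw [dotProduct_mulVec, ← mulVec_transpose, hA.eq, dotProduct_comm]

theorem add_smul_dotProduct_mulVec_add_smul (A : Matrix m m R) (x y : m → R) (t : R) :
    (x + t • y) ⬝ᵥ A *ᵥ (x + t • y) =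
      x ⬝ᵥ A *ᵥ x + t * (x ⬝ᵥ A *ᵥ y + y ⬝ᵥ A *ᵥ x) + t ^ 2 * (y ⬝ᵥ A *ᵥ y) := by
  simp only [add_dotProduct, dotProduct_add, mulVec_add, mulVec_smul, dotProduct_smul,
    smul_dotProduct, smul_eq_mul]
  ring

theorem dotProduct_mulVec_eq_zero_of_forall_add_smul [NoZeroDivisors R] {A : Matrix m m R}
    {x y : m → R} (hline : ∀ t : R, (x + t • y) ⬝ᵥ A *ᵥ (x + t • y) = 0)
    (hA : (2 : R) = 0 → A.IsSymm) : y ⬝ᵥ A *ᵥ y = 0 := by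
  have hq (t : R) :=
    (add_smul_dotProduct_mulVec_add_smul A x y t).symm.trans (hline t)
  rcases eq_or_ne (2 : R) 0 with h2 | h2
  · rw [dotProduct_mulVec_comm_of_isSymm (hA h2) x y] at hq
    linear_combination hq 1 - hq 0 - (y ⬝ᵥ A *ᵥ x) * h2
  · refine (mul_eq_zero.mp ?_).resolve_left h2
    linear_combination hq 1 + hq (-1) - 2 * hq 0

theorem det_fromBlocks_replicateRow_single_zero [DecidableEq m] (P : Matrix m m R) (b : m → R)
    (j : m) :
    (fromBlocks P (replicateCol Unit b) (replicateRow Unit (Pi.single j 1)) 0).det =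
      -(P.updateCol j b).det := by
  -- swapping column `j` with the border column makes the matrix block upper triangular
  have hswap := det_permute' (Equiv.swap (Sum.inl j) (Sum.inr ()))
    (fromBlocks P (replicateCol Unit b) (replicateRow Unit (Pi.single j 1)) 0)
  have hblocks :
      (fromBlocks P (replicateCol Unit b) (replicateRow Unit (Pi.single j 1)) 0).submatrix id
        (Equiv.swap (Sum.inl j) (Sum.inr ())) =
      fromBlocks (P.updateCol j b) (replicateCol Unit fun i => P i j) 0 1 := by
    ext (i | i) (k | k) <;> simp [Equiv.swap_apply_def, updateCol_apply] <;> split_ifs <;>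
      simp_all
  rw [hblocks, det_fromBlocks_zero₂₁, det_one, mul_one, Equiv.Perm.sign_swap (by simp)] at hswap
  simp [hswap]

theorem det_fromBlocks_replicateCol_replicateRow_zero [DecidableEq m] (P : Matrix m m R)
    (b c : m → R) :
    (fromBlocks P (replicateCol Unit b) (replicateRow Unit c) 0).det =
      -(c ⬝ᵥ P.adjugate *ᵥ b) := by
  have hrow (j : m) :
      (fromBlocks P (replicateCol Unit b) (replicateRow Unit c) 0).updateRow (Sum.inr ())
        (Pi.single (Sum.inl j) 1) =
      fromBlocks P (replicateCol Unit b) (replicateRow Unit (Pi.single j 1)) 0 := by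
    ext (i | i) (k | k) <;> simp [updateRow_apply, Pi.single_apply]
  rw [det_eq_sum_mul_adjugate_row _ (Sum.inr ()), Fintype.sum_sum_type,
    ← cramer_eq_adjugate_mulVec]
  simp [adjugate_apply, hrow, det_fromBlocks_replicateRow_single_zero, cramer_apply, dotProduct]

end Matrix

theorem stmt1_general {K : Type*} [Field K] (n : ℕ)
    (P : Matrix (Fin (n - 1)) (Fin (n - 1)) K)
    (hP : ∀ X : Fin (n - 1) → K, X ⬝ᵥ P *ᵥ X = 0)
    (C₀ C : Fin (n - 1) → K)
    (hsing : ∀ t : K,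
      (Matrix.fromBlocks P (Matrix.of fun i (_ : Unit) => C₀ i)
          (Matrix.of fun (_ : Unit) j => -C₀ j) (0 : Matrix Unit Unit K)
        + t • Matrix.fromBlocks (0 : Matrix (Fin (n - 1)) (Fin (n - 1)) K)
          (Matrix.of fun i (_ : Unit) => C i)
          (Matrix.of fun (_ : Unit) j => -C j) (0 : Matrix Unit Unit K)).det = 0) :
    C ⬝ᵥ P.adjugate *ᵥ C = 0 := by
  refine dotProduct_mulVec_eq_zero_of_forall_add_smul (x := C₀) (fun t => ?_)
    fun h2 =>
      (isSymm_of_two_eq_zero_of_forall_dotProduct_mulVec_self_eq_zero h2 hP).adjugate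
  have hblocks : Matrix.fromBlocks P (Matrix.of fun i (_ : Unit) => C₀ i)
        (Matrix.of fun (_ : Unit) j => -C₀ j) (0 : Matrix Unit Unit K)
      + t • Matrix.fromBlocks (0 : Matrix (Fin (n - 1)) (Fin (n - 1)) K)
        (Matrix.of fun i (_ : Unit) => C i)
        (Matrix.of fun (_ : Unit) j => -C j) (0 : Matrix Unit Unit K) =
      fromBlocks P (replicateCol Unit (C₀ + t • C)) (replicateRow Unit (-(C₀ + t • C))) 0 := by
    ext (i | i) (j | j) <;> simp [add_comm]
  have hdet := hsing t
  rwa [hblocks, det_fromBlocks_replicateCol_replicateRow_zero, neg_dotProduct, neg_neg] at hdet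

/-- If `A` is an `n × n` alternating matrix with blocks `[[P, C₀],[−C₀ᵀ, 0]]` and
`N = [[0, C],[−Cᵀ, 0]]`, and `A + t • N` is singular for all `t`, then
`Cᵀ · adjugate P · C = 0`. -/
theorem stmt1 {K : Type*} [Field K] (n : ℕ) (hn : 2 ≤ n)
    (P : Matrix (Fin (n - 1)) (Fin (n - 1)) K)
    (hP : ∀ X : Fin (n - 1) → K, X ⬝ᵥ P *ᵥ X = 0)
    (C₀ C : Fin (n - 1) → K)
    (hsing : ∀ t : K,
      (Matrix.fromBlocks P (Matrix.of fun i (_ : Unit) => C₀ i)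
          (Matrix.of fun (_ : Unit) j => -C₀ j) (0 : Matrix Unit Unit K)
        + t • Matrix.fromBlocks (0 : Matrix (Fin (n - 1)) (Fin (n - 1)) K)
          (Matrix.of fun i (_ : Unit) => C i)
          (Matrix.of fun (_ : Unit) j => -C j) (0 : Matrix Unit Unit K)).det = 0) :
    C ⬝ᵥ P.adjugate *ᵥ C = 0 :=
  stmt1_general n P hP C₀ C hsing
end

section
/- Let K be a field and n ≥ 2. Let A be an n×n symmetric matrix over K, written in block form A = [[P, C₀],[C₀ᵀ, a₀]] with P an (n-1)×(n-1) symmetric matrix, C₀ ∈ K^{n-1} and a₀ ∈ K. Let C ∈ K^{n-1}, a ∈ K, and set N = [[0_{(n-1)×(n-1)}, C],[Cᵀ, a]]. Assume A + t·N is singular for every t ∈ K. Then: (a) if K has more than 2 elements, Cᵀ·P^ad·C = 0; (b) if K has characteristic 2, Cᵀ·P^ad·C = a·det(P); (c) if C = 0 and a ≠ 0, then det(P) = 0. -/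
/-!
By the bordered-determinant formula `det [[P, u], [vᵀ, c]] = c · det P - vᵀ · adj P · u` and the
symmetry of `adj P`, `det (A + t • N) = α + β t - γ t²` with `γ = Cᵀ adj P C`,
`β = a det P - 2 C₀ᵀ adj P C`. If this vanishes for all `t`, three distinct points force `γ = 0`;
the points `0, 1` give `β = γ`, which in characteristic 2 reads `a det P = γ`; and for `C = 0`
they give `a det P = 0`.
-/

open Matrix

namespace Matrix

variable {R : Type*} {m ι : Type*}

theorem fromBlocks_replicateCol_add_smul_fromBlocks_replicateCol [Semiring R] (P : Matrix m m R)
    (u w : m → R) (c d t : R) :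
    fromBlocks P (replicateCol ι u) (replicateRow ι u) (of fun _ _ => c)
        + t • fromBlocks 0 (replicateCol ι w) (replicateRow ι w) (of fun _ _ => d)
      = fromBlocks P (replicateCol ι (u + t • w)) (replicateRow ι (u + t • w))
          (of fun _ _ => c + t * d) := by
  rw [fromBlocks_smul, fromBlocks_add, replicateCol_add, replicateRow_add, replicateCol_smul,
    replicateRow_smul, smul_zero, add_zero]
  rfl

variable [CommRing R] [Fintype m] [DecidableEq m] [Unique ι]

theorem det_updateRow_fromBlocks_inr_single_inr (P : Matrix m m R) (B : Matrix m ι R)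
    (D : Matrix ι m R) (E : Matrix ι ι R) (i : ι) :
    ((fromBlocks P B D E).updateRow (Sum.inr i) (Pi.single (Sum.inr i) 1)).det = P.det := by
  have h : (fromBlocks P B D E).updateRow (Sum.inr i) (Pi.single (Sum.inr i) 1)
      = fromBlocks P B 0 1 := by
    ext (k | k) (l | l) <;> simp [updateRow_apply, Subsingleton.elim _ i]
  simp [h]

theorem det_updateRow_fromBlocks_inr_single_inl (P : Matrix m m R) (u : m → R)
    (D : Matrix ι m R) (E : Matrix ι ι R) (i : ι) (j : m) :
    ((fromBlocks P (replicateCol ι u) D E).updateRow (Sum.inr i)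
      (Pi.single (Sum.inl j) 1)).det = -(P.updateCol j u).det := by
  -- swapping the columns `inl j` and `inr i` makes the matrix block upper triangular
  set σ := Equiv.swap (Sum.inl j) (Sum.inr i : m ⊕ ι)
  have h : ((fromBlocks P (replicateCol ι u) D E).updateRow (Sum.inr i)
      (Pi.single (Sum.inl j) 1)).submatrix id σ
        = fromBlocks (P.updateCol j u) (replicateCol ι (fun k => P k j)) 0 1 := by
    ext (k | k) (l | l)
    · by_cases hl : l = j <;> simp [σ, hl, Equiv.swap_apply_def, updateRow_apply]
    · simp [σ, updateRow_apply, Subsingleton.elim l i]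
    · by_cases hl : l = j <;>
        simp [σ, hl, Equiv.swap_apply_def, updateRow_apply, Subsingleton.elim k i]
    · simp [σ, updateRow_apply, Subsingleton.elim l i, Subsingleton.elim k i]
  have hσ : Equiv.Perm.sign σ = -1 := Equiv.Perm.sign_swap (by simp)
  have := det_permute' σ ((fromBlocks P (replicateCol ι u) D E).updateRow (Sum.inr i)
      (Pi.single (Sum.inl j) 1))
  rw [h, det_fromBlocks_zero₂₁, det_one, mul_one, hσ] at this
  simp [this]

theorem det_fromBlocks_replicateCol_replicateRow (P : Matrix m m R) (u v : m → R) (c : R) :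
    (fromBlocks P (replicateCol ι u) (replicateRow ι v) (of fun _ _ => c)).det
      = c * P.det - v ⬝ᵥ P.adjugate *ᵥ u := by
  rw [det_eq_sum_mul_adjugate_row _ (Sum.inr default), Fintype.sum_sum_type,
    Fintype.sum_unique (ι := ι)]
  simp only [adjugate_apply, det_updateRow_fromBlocks_inr_single_inl,
    det_updateRow_fromBlocks_inr_single_inr, ← cramer_eq_adjugate_mulVec, dotProduct,
    cramer_apply, fromBlocks_apply₂₁, fromBlocks_apply₂₂, replicateRow_apply, of_apply, mul_neg,
    Finset.sum_neg_distrib]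
  ring

theorem IsSymm.dotProduct_adjugate_mulVec_comm {P : Matrix m m R} (hP : P.IsSymm)
    (x y : m → R) : x ⬝ᵥ P.adjugate *ᵥ y = y ⬝ᵥ P.adjugate *ᵥ x := by
  rw [← dotProduct_transpose_mulVec, hP.adjugate.eq]

theorem IsSymm.det_fromBlocks_add_smul_fromBlocks {P : Matrix m m R} (hP : P.IsSymm)
    (u w : m → R) (c d t : R) :
    (Matrix.fromBlocks P (replicateCol ι u) (replicateRow ι u) (of fun _ _ => c)
        + t • Matrix.fromBlocks 0 (replicateCol ι w) (replicateRow ι w) (of fun _ _ => d)).det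
      = (c * P.det - u ⬝ᵥ P.adjugate *ᵥ u) + (d * P.det - 2 * (u ⬝ᵥ P.adjugate *ᵥ w)) * t
        - (w ⬝ᵥ P.adjugate *ᵥ w) * t ^ 2 := by
  rw [fromBlocks_replicateCol_add_smul_fromBlocks_replicateCol,
    det_fromBlocks_replicateCol_replicateRow]
  simp only [mulVec_add, mulVec_smul, dotProduct_add, add_dotProduct, dotProduct_smul,
    smul_dotProduct, smul_eq_mul, hP.dotProduct_adjugate_mulVec_comm w u]
  ring

end Matrix

theorem eq_zero_of_quadratic_eq_zero_of_three {K : Type*} [Field K] {α β γ x y z : K}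
    (hxy : x ≠ y) (hxz : x ≠ z) (hyz : y ≠ z) (hx : α + β * x + γ * x ^ 2 = 0)
    (hy : α + β * y + γ * y ^ 2 = 0) (hz : α + β * z + γ * z ^ 2 = 0) : γ = 0 := by
  have hxy' : β + γ * (x + y) = 0 := by
    refine (mul_eq_zero.mp ?_).resolve_left (sub_ne_zero.mpr hxy)
    linear_combination hx - hy
  have hxz' : β + γ * (x + z) = 0 := by
    refine (mul_eq_zero.mp ?_).resolve_left (sub_ne_zero.mpr hxz)
    linear_combination hx - hz
  refine (mul_eq_zero.mp ?_).resolve_right (sub_ne_zero.mpr hyz)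
  linear_combination hxy' - hxz'

theorem stmt2_general {K : Type*} [Field K] (n : ℕ)
    (P : Matrix (Fin (n - 1)) (Fin (n - 1)) K) (hP : P.IsSymm)
    (C₀ C : Fin (n - 1) → K) (a₀ a : K)
    (hsing : ∀ t : K,
      (Matrix.fromBlocks P (Matrix.of fun i (_ : Unit) => C₀ i)
          (Matrix.of fun (_ : Unit) j => C₀ j) (Matrix.of fun (_ _ : Unit) => a₀)
        + t • Matrix.fromBlocks (0 : Matrix (Fin (n - 1)) (Fin (n - 1)) K)
          (Matrix.of fun i (_ : Unit) => C i)
          (Matrix.of fun (_ : Unit) j => C j) (Matrix.of fun (_ _ : Unit) => a)).det = 0) :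
    ((∃ x y z : K, x ≠ y ∧ x ≠ z ∧ y ≠ z) → C ⬝ᵥ P.adjugate *ᵥ C = 0) ∧
    (ringChar K = 2 → C ⬝ᵥ P.adjugate *ᵥ C = a * P.det) ∧
    (C = 0 → a ≠ 0 → P.det = 0) := by
  have key (t : K) : (a₀ * P.det - C₀ ⬝ᵥ P.adjugate *ᵥ C₀)
      + (a * P.det - 2 * (C₀ ⬝ᵥ P.adjugate *ᵥ C)) * t
      + -(C ⬝ᵥ P.adjugate *ᵥ C) * t ^ 2 = 0 := by
    linear_combination
      (hP.det_fromBlocks_add_smul_fromBlocks (ι := Unit) C₀ C a₀ a t).symm.trans (hsing t)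
  refine ⟨?_, ?_, ?_⟩
  · rintro ⟨x, y, z, hxy, hxz, hyz⟩
    exact neg_eq_zero.mp
      (eq_zero_of_quadratic_eq_zero_of_three hxy hxz hyz (key x) (key y) (key z))
  · intro hchar
    have := ringChar.of_eq hchar
    linear_combination key 0 - key 1 - (C₀ ⬝ᵥ P.adjugate *ᵥ C) * CharTwo.two_eq_zero (R := K)
  · rintro rfl ha
    simpa [ha] using sub_eq_zero.mpr ((key 1).trans (key 0).symm)

/-- If `A` is an `n × n` symmetric matrix with blocks `[[P, C₀],[C₀ᵀ, a₀]]` and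
`N = [[0, C],[Cᵀ, a]]`, and `A + t • N` is singular for all `t`, then:
(a) if `K` has more than two elements, `Cᵀ · adjugate P · C = 0`;
(b) if `K` has characteristic 2, `Cᵀ · adjugate P · C = a * det P`;
(c) if `C = 0` and `a ≠ 0`, then `det P = 0`. -/
theorem stmt2 {K : Type*} [Field K] (n : ℕ) (hn : 2 ≤ n)
    (P : Matrix (Fin (n - 1)) (Fin (n - 1)) K) (hP : P.IsSymm)
    (C₀ C : Fin (n - 1) → K) (a₀ a : K)
    (hsing : ∀ t : K,
      (Matrix.fromBlocks P (Matrix.of fun i (_ : Unit) => C₀ i)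
          (Matrix.of fun (_ : Unit) j => C₀ j) (Matrix.of fun (_ _ : Unit) => a₀)
        + t • Matrix.fromBlocks (0 : Matrix (Fin (n - 1)) (Fin (n - 1)) K)
          (Matrix.of fun i (_ : Unit) => C i)
          (Matrix.of fun (_ : Unit) j => C j) (Matrix.of fun (_ _ : Unit) => a)).det = 0) :
    ((∃ x y z : K, x ≠ y ∧ x ≠ z ∧ y ≠ z) → C ⬝ᵥ P.adjugate *ᵥ C = 0) ∧
    (ringChar K = 2 → C ⬝ᵥ P.adjugate *ᵥ C = a * P.det) ∧
    (C = 0 → a ≠ 0 → P.det = 0) :=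
  stmt2_general n P hP C₀ C a₀ a hsing
end

section
/- Let K be a field, n ≥ 3 an integer, and r an even positive integer with r < n. Let A be an n×n alternating matrix over K, written in block form A = [[0, L, a],[−Lᵀ, B, C],[−a, −Cᵀ, 0]] with L a 1×(n-2) row, C ∈ K^{n-2}, a ∈ K, and B an (n-2)×(n-2) alternating matrix. Set N = E_{1,n} − E_{n,1}. If rank(A + t·N) ≤ r for every t ∈ K, then rank(B) ≤ r − 2. -/
/-!
An alternating matrix has even rank: a nondegenerate alternating form splits off hyperbolic
planes. As `B` is a submatrix of every `A + t • N` and `r` is even, `rank B > r - 2` would force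
`rank B = r`. Then bordering `B` by the column `C`, the row `L` and the corner `a + t` does not
raise the rank, which pins the corner down: `a + t = L ⬝ᵥ v` for any `v` with `B *ᵥ v = C`,
for every `t` at once, which is absurd.
-/

open Matrix Module

namespace LinearMap.BilinForm

section CommRing

variable {R M : Type*} [CommRing R] [AddCommGroup M] [Module R M] {B : LinearMap.BilinForm R M}

lemma IsRefl.restrict_nondegenerate_of_isCompl_ker (hB : B.IsRefl)
    {W : Submodule R M} (hW : IsCompl W (ker B)) : (B.restrict W).Nondegenerate := by
  have hB' : (B.restrict W).IsRefl := fun x y ↦ hB x y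
  refine hB'.nondegenerate_iff_separatingLeft.mpr ?_
  rintro ⟨x, hx⟩ hx'
  suffices x ∈ W ⊓ ker B by simpa [hW.inf_eq_bot] using this
  refine ⟨hx, ?_⟩
  ext y
  obtain ⟨u, hu, v, hv, rfl⟩ : ∃ u ∈ W, ∃ v ∈ ker B, u + v = y := by
    rw [← Submodule.mem_sup, hW.sup_eq_top]; exact Submodule.mem_top
  rw [mem_ker] at hv
  simp [show B x u = 0 from hx' ⟨u, hu⟩, hB v x (by simp [hv])]

end CommRing

variable {K V : Type*} [Field K] [AddCommGroup V] [Module K V] {B : LinearMap.BilinForm K V}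

lemma IsAlt.apply_ne_zero_symm (hB : B.IsAlt) {x y : V} (hxy : B x y ≠ 0) : B y x ≠ 0 := by
  rw [← LinearMap.IsAlt.neg hB x y]
  exact neg_ne_zero.mpr hxy

lemma IsAlt.linearIndependent_pair (hB : B.IsAlt) {x y : V} (hxy : B x y ≠ 0) :
    LinearIndependent K ![x, y] := by
  refine LinearIndependent.pair_iff.mpr fun s t hst ↦ ?_
  have hs : s = 0 := by simpa [hB y, hxy] using congrArg (B · y) hst
  have ht : t = 0 := by
    simpa [hB x, hB.apply_ne_zero_symm hxy] using congrArg (B · x) hst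
  exact ⟨hs, ht⟩

lemma IsAlt.finrank_span_pair (hB : B.IsAlt) {x y : V} (hxy : B x y ≠ 0) :
    finrank K (Submodule.span K {x, y}) = 2 := by
  have := finrank_span_eq_card (hB.linearIndependent_pair hxy)
  rwa [Matrix.range_cons_cons_empty, Fintype.card_fin] at this

lemma IsAlt.restrict_span_pair_nondegenerate (hB : B.IsAlt) {x y : V} (hxy : B x y ≠ 0) :
    (B.restrict (Submodule.span K {x, y})).Nondegenerate := by
  have hrefl : (B.restrict (Submodule.span K {x, y})).IsRefl := fun u v ↦ hB.isRefl u v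
  refine hrefl.nondegenerate_iff_separatingLeft.mpr ?_
  rintro ⟨v, hv⟩ h
  obtain ⟨s, t, rfl⟩ := Submodule.mem_span_pair.mp hv
  have hs : s = 0 := by
    simpa [hB y, hxy] using h ⟨y, Submodule.subset_span (by simp)⟩
  have ht : t = 0 := by
    simpa [hB x, hB.apply_ne_zero_symm hxy, hs] using h ⟨x, Submodule.subset_span (by simp)⟩
  simp [hs, ht]

lemma IsAlt.even_finrank_of_nondegenerate [FiniteDimensional K V] (hB : B.IsAlt)
    (hnd : B.Nondegenerate) : Even (finrank K V) := by
  induction hk : finrank K V using Nat.strong_induction_on generalizing V with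
  | _ k ih =>
  rcases k.eq_zero_or_pos with rfl | hpos
  · exact Even.zero
  have : Nontrivial V := Module.finrank_pos_iff.mp (hk ▸ hpos)
  obtain ⟨x, hx⟩ := exists_ne (0 : V)
  obtain ⟨y, hxy⟩ : ∃ y, B x y ≠ 0 := by
    by_contra! h
    exact hx (hnd.1 x h)
  set W := Submodule.span K {x, y}
  have hW : finrank K W = 2 := hB.finrank_span_pair hxy
  have hWperp : finrank K (B.orthogonal W) = k - 2 := by
    rw [finrank_orthogonal hnd, hk, hW]
  have hk2 : 2 ≤ k := hk ▸ hW ▸ Submodule.finrank_le W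
  -- the hyperbolic plane `W` splits off, leaving a nondegenerate alternating form on `Wᗮ`
  have hndperp : (B.restrict (B.orthogonal W)).Nondegenerate := by
    rw [restrict_nondegenerate_iff_isCompl_orthogonal hB.isRefl,
      orthogonal_orthogonal hnd hB.isRefl]
    exact (isCompl_orthogonal_of_restrict_nondegenerate hB.isRefl
      (hB.restrict_span_pair_nondegenerate hxy)).symm
  obtain ⟨c, hc⟩ := ih (k - 2) (by omega) (B := B.restrict (B.orthogonal W)) (fun v ↦ hB v)
    hndperp hWperp
  exact ⟨c + 1, by omega⟩

lemma IsAlt.even_finrank_range [FiniteDimensional K V] (hB : B.IsAlt) :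
    Even (finrank K (range B)) := by
  obtain ⟨W, hW⟩ := Submodule.exists_isCompl (ker B)
  have hWrange : finrank K W = finrank K (range B) := by
    have := Submodule.finrank_add_eq_of_isCompl hW
    have := finrank_range_add_finrank_ker B
    omega
  rw [← hWrange]
  exact IsAlt.even_finrank_of_nondegenerate (B := B.restrict W) (fun v ↦ hB v)
    (hB.isRefl.restrict_nondegenerate_of_isCompl_ker hW.symm)

end LinearMap.BilinForm

namespace Matrix

variable {K : Type*} [Field K]

section Alternating

variable {m : Type*} [Fintype m] [DecidableEq m]

lemma ker_toBilin'_eq_ker_mulVecLin {A : Matrix m m K} (hA : (toBilin' A).IsAlt) :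
    LinearMap.ker (toBilin' A) = LinearMap.ker A.mulVecLin := by
  ext x
  simp only [LinearMap.mem_ker, LinearMap.ext_iff, LinearMap.zero_apply, mulVecLin_apply]
  calc (∀ y, toBilin' A x y = 0) ↔ ∀ y, y ⬝ᵥ A *ᵥ x = 0 := by
        simp only [← toBilin'_apply', hA.isRefl.eq_iff]
    _ ↔ A *ᵥ x = 0 := by simp only [dotProduct_comm _ (A *ᵥ x), dotProduct_eq_zero_iff]

lemma even_rank_of_alternating {A : Matrix m m K} (hA : ∀ x, x ⬝ᵥ A *ᵥ x = 0) :
    Even A.rank := by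
  have hA' : (toBilin' A).IsAlt := fun x ↦ by simpa [toBilin'_apply'] using hA x
  have h₁ := LinearMap.finrank_range_add_finrank_ker (toBilin' A)
  have h₂ := LinearMap.finrank_range_add_finrank_ker A.mulVecLin
  rw [ker_toBilin'_eq_ker_mulVecLin hA'] at h₁
  have : A.rank = finrank K (LinearMap.range (toBilin' A)) := by rw [rank]; omega
  exact this ▸ LinearMap.BilinForm.IsAlt.even_finrank_range hA'

end Alternating

section Bordered

variable {m n : Type*} [Fintype n]

lemma range_mulVecLin_le_range_fromCols {n' : Type*} [Fintype n'] (A : Matrix m n K)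
    (A' : Matrix m n' K) :
    LinearMap.range A.mulVecLin ≤ LinearMap.range (fromCols A A').mulVecLin := by
  rintro _ ⟨v, rfl⟩
  exact ⟨Sum.elim v 0, by simp⟩

lemma rank_le_rank_fromCols {n' : Type*} [Fintype n'] (A : Matrix m n K) (A' : Matrix m n' K) :
    A.rank ≤ (fromCols A A').rank :=
  Submodule.finrank_mono (range_mulVecLin_le_range_fromCols A A')

lemma rank_le_rank_fromRows {m' : Type*} (A : Matrix m n K) (A' : Matrix m' n K) :
    A.rank ≤ (fromRows A A').rank :=
  rank_submatrix_le (fromRows A A') Sum.inl id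

lemma exists_mulVec_eq_of_rank_fromCols_le {A : Matrix m n K} {c : m → K}
    (h : (fromCols A (replicateCol Unit c)).rank ≤ A.rank) : ∃ v, A *ᵥ v = c := by
  have hc : c ∈ LinearMap.range (fromCols A (replicateCol Unit c)).mulVecLin :=
    ⟨Sum.elim 0 1, by ext i; simp [mulVec, dotProduct]⟩
  rwa [← Submodule.eq_of_le_of_finrank_le (range_mulVecLin_le_range_fromCols A _) h] at hc

lemma exists_vecMul_eq_of_rank_fromRows_le [Fintype m] {A : Matrix m n K} {u : n → K}
    (h : (fromRows A (replicateRow Unit u)).rank ≤ A.rank) : ∃ w, w ᵥ* A = u := by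
  rw [← rank_transpose, transpose_fromRows, transpose_replicateRow, ← rank_transpose A] at h
  obtain ⟨w, hw⟩ := exists_mulVec_eq_of_rank_fromCols_le h
  exact ⟨w, by rwa [← mulVec_transpose]⟩

lemma eq_dotProduct_of_rank_bordered_le [Fintype m] {A : Matrix m n K} {c : m → K} {u : n → K}
    {x : K}
    (h : (fromRows (fromCols A (replicateCol Unit c))
      (replicateRow Unit (Sum.elim u fun _ ↦ x))).rank ≤ A.rank)
    {v : n → K} (hv : A *ᵥ v = c) : x = u ⬝ᵥ v := by
  obtain ⟨w, hw⟩ := exists_vecMul_eq_of_rank_fromRows_le (h.trans (rank_le_rank_fromCols _ _))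
  rw [vecMul_fromCols, Sum.elim_eq_iff] at hw
  calc x = w ⬝ᵥ c := by simpa [vecMul, dotProduct] using (congrFun hw.2 ()).symm
    _ = u ⬝ᵥ v := by rw [← hv, dotProduct_mulVec, hw.1]

end Bordered

end Matrix

theorem stmt3_general {K : Type*} [Field K] (n r : ℕ) (hre : Even r)
    (L C : Fin (n - 2) → K) (a : K)
    (B : Matrix (Fin (n - 2)) (Fin (n - 2)) K)
    (hB : ∀ X : Fin (n - 2) → K, X ⬝ᵥ B *ᵥ X = 0)
    (hrk : ∀ t : K,
      (Matrix.fromBlocks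
          (Matrix.of fun (_ _ : Unit) => (0 : K))
          (Matrix.of fun (_ : Unit) (j : Fin (n - 2) ⊕ Unit) => Sum.elim L (fun _ => a) j)
          (Matrix.of fun (i : Fin (n - 2) ⊕ Unit) (_ : Unit) =>
            Sum.elim (fun k => -L k) (fun _ => -a) i)
          (Matrix.fromBlocks B (Matrix.of fun i (_ : Unit) => C i)
            (Matrix.of fun (_ : Unit) j => -C j) (0 : Matrix Unit Unit K))
        + t • Matrix.fromBlocks
          (Matrix.of fun (_ _ : Unit) => (0 : K))
          (Matrix.of fun (_ : Unit) (j : Fin (n - 2) ⊕ Unit) =>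
            Sum.elim (fun _ => (0 : K)) (fun _ => 1) j)
          (Matrix.of fun (i : Fin (n - 2) ⊕ Unit) (_ : Unit) =>
            Sum.elim (fun _ => (0 : K)) (fun _ => -1) i)
          (0 : Matrix (Fin (n - 2) ⊕ Unit) (Fin (n - 2) ⊕ Unit) K)).rank ≤ r) :
    B.rank ≤ r - 2 := by
  -- rows `2, …, n - 1, 1` and columns `2, …, n` of `A + t • N` form `[[B, C], [L, a + t]]`
  have hrank : ∀ t, (fromRows (fromCols B (replicateCol Unit C))
      (replicateRow Unit (Sum.elim L fun _ ↦ a + t))).rank ≤ r := by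
    intro t
    refine le_trans (le_of_eq ?_) ((rank_submatrix_le _
      (Sum.elim (Sum.inr ∘ Sum.inl) fun _ : Unit ↦ Sum.inl ())
      (Sum.elim (Sum.inr ∘ Sum.inl) fun _ : Unit ↦ Sum.inr (Sum.inr ()))).trans (hrk t))
    congr 1
    ext (i | i) (j | j) <;> simp
  have hBr : B.rank ≤ r :=
    ((rank_le_rank_fromCols _ _).trans (rank_le_rank_fromRows _ _)).trans (hrank 0)
  have hBr_ne : B.rank ≠ r := by
    intro hBeq
    obtain ⟨v, hv⟩ := exists_mulVec_eq_of_rank_fromCols_le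
      (((rank_le_rank_fromRows _ _).trans (hrank 0)).trans_eq hBeq.symm)
    have h₀ := eq_dotProduct_of_rank_bordered_le ((hrank 0).trans_eq hBeq.symm) hv
    have h₁ := eq_dotProduct_of_rank_bordered_le ((hrank 1).trans_eq hBeq.symm) hv
    exact one_ne_zero (by linear_combination h₁ - h₀)
  obtain ⟨b, hb⟩ := even_rank_of_alternating hB
  obtain ⟨s, hs⟩ := hre
  omega

/-- Extraction lemma for alternating matrices: if the `n × n` alternating matrix
`A = [[0, L, a],[−Lᵀ, B, C],[−a, −Cᵀ, 0]]` satisfies `rank (A + t • (E₁ₙ − Eₙ₁)) ≤ r`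
for every `t`, where `r` is even, positive and `r < n`, then `rank B ≤ r − 2`. -/
theorem stmt3 {K : Type*} [Field K] (n r : ℕ) (hn : 3 ≤ n)
    (hr0 : 0 < r) (hre : Even r) (hrn : r < n)
    (L C : Fin (n - 2) → K) (a : K)
    (B : Matrix (Fin (n - 2)) (Fin (n - 2)) K)
    (hB : ∀ X : Fin (n - 2) → K, X ⬝ᵥ B *ᵥ X = 0)
    (hrk : ∀ t : K,
      (Matrix.fromBlocks
          (Matrix.of fun (_ _ : Unit) => (0 : K))
          (Matrix.of fun (_ : Unit) (j : Fin (n - 2) ⊕ Unit) => Sum.elim L (fun _ => a) j)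
          (Matrix.of fun (i : Fin (n - 2) ⊕ Unit) (_ : Unit) =>
            Sum.elim (fun k => -L k) (fun _ => -a) i)
          (Matrix.fromBlocks B (Matrix.of fun i (_ : Unit) => C i)
            (Matrix.of fun (_ : Unit) j => -C j) (0 : Matrix Unit Unit K))
        + t • Matrix.fromBlocks
          (Matrix.of fun (_ _ : Unit) => (0 : K))
          (Matrix.of fun (_ : Unit) (j : Fin (n - 2) ⊕ Unit) =>
            Sum.elim (fun _ => (0 : K)) (fun _ => 1) j)
          (Matrix.of fun (i : Fin (n - 2) ⊕ Unit) (_ : Unit) =>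
            Sum.elim (fun _ => (0 : K)) (fun _ => -1) i)
          (0 : Matrix (Fin (n - 2) ⊕ Unit) (Fin (n - 2) ⊕ Unit) K)).rank ≤ r) :
    B.rank ≤ r - 2 :=
  stmt3_general n r hre L C a B hB hrk
end

section
/- Let K be a field, n ≥ 3 an integer, and r a positive integer with r < n. Let A be an n×n symmetric matrix over K, written in block form A = [[a, L, b],[Lᵀ, B, C],[b, Cᵀ, c]] with L a 1×(n-2) row, C ∈ K^{n-2}, a, b, c ∈ K, and B an (n-2)×(n-2) symmetric matrix. Let d ∈ K and set N to be the symmetric matrix with entry 1 at positions (1,n) and (n,1), entry d at position (n,n), and all other entries zero. Assume rank(A + t·N) ≤ r for every t ∈ K. If K has more than 2 elements or d = 0, then rank(B) ≤ r − 2. -/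
/-!
Let `k = rank B`. A complement of `ker B` has dimension `k`, and the restriction of the symmetric
form `B` to it is nondegenerate: a basis of it, written as the columns of `P`, makes `Pᵀ B P`
invertible. Conjugating `A + t N` (after moving its first and last index to the end) by
`diag(Pᵀ, 1, 1)` gives a `(k + 2)`-square matrix whose Schur complement is
`[[a, b + t], [b + t, c + t d]] - G` with `G` symmetric and independent of `t`. Its determinant is
a quadratic polynomial in `t` with leading coefficient `-1`, or `-(b' + t)² + const` if `d = 0`;
such a polynomial has a non-root when `K` has at least three elements or `d = 0`, and for that
`t` the rank of `A + t N` is at least `k + 2`.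
-/

open Matrix

namespace Matrix

variable {K : Type*} [Field K] {m : Type*} [Fintype m]

theorem IsSymm.dotProduct_mulVec_eq_zero_of_mem_ker {B : Matrix m m K} (hB : B.IsSymm)
    {y : m → K} (hy : y ∈ LinearMap.ker B.mulVecLin) (x : m → K) : y ⬝ᵥ B *ᵥ x = 0 := by
  rw [dotProduct_mulVec, ← mulVec_transpose, hB.eq]
  simp only [LinearMap.mem_ker, mulVecLin_apply] at hy
  rw [hy, zero_dotProduct]

theorem IsSymm.isUnit_transpose_mul_mul {k : Type*} [Fintype k] [DecidableEq k]
    {B : Matrix m m K} (hB : B.IsSymm) {P : Matrix m k K} (hP : Function.Injective P.mulVec)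
    (hcompl : IsCompl (LinearMap.ker B.mulVecLin) (LinearMap.range P.mulVecLin)) :
    IsUnit (Pᵀ * B * P) := by
  rw [← mulVec_injective_iff_isUnit]
  change Function.Injective (Pᵀ * B * P).mulVecLin
  refine LinearMap.ker_eq_bot.1 (LinearMap.ker_eq_bot'.2 fun z hz => ?_)
  set w := B *ᵥ P *ᵥ z
  have hPw : Pᵀ *ᵥ w = 0 := by
    simpa only [w, mulVec_mulVec, Matrix.mul_assoc, mulVecLin_apply] using hz
  have hw : w = 0 := by
    refine dotProduct_eq_zero_iff.1 fun y => ?_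
    obtain ⟨y₁, hy₁, _, ⟨c, rfl⟩, rfl⟩ :=
      Submodule.mem_sup.1 (hcompl.sup_eq_top ▸ Submodule.mem_top (x := y))
    rw [dotProduct_comm, add_dotProduct, hB.dotProduct_mulVec_eq_zero_of_mem_ker hy₁,
      mulVecLin_apply, dotProduct_comm, dotProduct_mulVec, ← mulVec_transpose, hPw,
      zero_dotProduct, add_zero]
  have hPz : P *ᵥ z = 0 :=
    Submodule.disjoint_def.1 hcompl.disjoint _ hw ⟨z, rfl⟩
  exact hP (hPz.trans (mulVec_zero P).symm)

theorem IsSymm.transpose_mul_mul {n : Type*} {B : Matrix m m K} (hB : B.IsSymm)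
    (P : Matrix m n K) : (Pᵀ * B * P).IsSymm := by
  rw [IsSymm, transpose_mul, transpose_mul, transpose_transpose, hB.eq, Matrix.mul_assoc]

theorem IsSymm.exists_isUnit_transpose_mul_mul {B : Matrix m m K} (hB : B.IsSymm) :
    ∃ P : Matrix m (Fin B.rank) K, IsUnit (Pᵀ * B * P) := by
  obtain ⟨U, hU⟩ := Submodule.exists_isCompl (LinearMap.ker B.mulVecLin)
  have hdim : Module.finrank K U = B.rank :=
    ((Submodule.quotientEquivOfIsCompl _ _ hU).symm.trans
      (LinearMap.quotKerEquivRange _)).finrank_eq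
  let f := U.subtype ∘ₗ ((Module.finBasis K U).reindex (finCongr hdim)).equivFun.symm.toLinearMap
  have hf : (LinearMap.toMatrix' f).mulVecLin = f := Matrix.toLin'_toMatrix' f
  refine ⟨LinearMap.toMatrix' f, hB.isUnit_transpose_mul_mul ?_ ?_⟩
  · change Function.Injective (LinearMap.toMatrix' f).mulVecLin
    rw [hf]
    exact U.injective_subtype.comp (LinearEquiv.injective _)
  · rw [hf, LinearMap.range_comp_of_range_eq_top _ (LinearEquiv.range _), Submodule.range_subtype]
    exact hU

theorem IsSymm.exists_rank_add_card_le_rank_fromBlocks {l : Type*} [Fintype l] [DecidableEq l]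
    {B : Matrix m m K} (hB : B.IsSymm) (E : Matrix m l K) :
    ∃ G : Matrix l l K, G.IsSymm ∧ ∀ F : Matrix l l K, IsUnit (F - G).det →
      B.rank + Fintype.card l ≤ (Matrix.fromBlocks B E Eᵀ F).rank := by
  obtain ⟨P, hP⟩ := hB.exists_isUnit_transpose_mul_mul
  refine ⟨(Pᵀ * E)ᵀ * (Pᵀ * B * P)⁻¹ * (Pᵀ * E),
    (hB.transpose_mul_mul P).inv.transpose_mul_mul _, fun F hF => ?_⟩
  let := hP.invertible
  let X : Matrix (Fin B.rank ⊕ l) (m ⊕ l) K := Matrix.fromBlocks Pᵀ 0 0 1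
  have hX : X * Matrix.fromBlocks B E Eᵀ F * Xᵀ =
      Matrix.fromBlocks (Pᵀ * B * P) (Pᵀ * E) (Pᵀ * E)ᵀ F := by
    simp [X, fromBlocks_transpose, fromBlocks_multiply, Matrix.mul_assoc]
  have hunit : IsUnit (Matrix.fromBlocks (Pᵀ * B * P) (Pᵀ * E) (Pᵀ * E)ᵀ F) := by
    rw [isUnit_iff_isUnit_det, det_fromBlocks₁₁, invOf_eq_nonsing_inv]
    exact (isUnit_det_of_invertible _).mul hF
  calc B.rank + Fintype.card l = (X * Matrix.fromBlocks B E Eᵀ F * Xᵀ).rank := by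
        rw [hX, rank_of_isUnit _ hunit, Fintype.card_sum, Fintype.card_fin]
    _ ≤ (Matrix.fromBlocks B E Eᵀ F).rank := (rank_mul_le_left _ _).trans (rank_mul_le_right _ _)

end Matrix

theorem exists_mul_add_mul_sub_sq_ne_zero {K : Type*} [Field K] (α β γ d : K)
    (hK : (∃ x y z : K, x ≠ y ∧ x ≠ z ∧ y ≠ z) ∨ d = 0) :
    ∃ t : K, α * (γ + t * d) - (β + t) ^ 2 ≠ 0 := by
  by_contra! h
  rcases hK with ⟨x, y, z, hxy, hxz, hyz⟩ | rfl
  · -- Vieta: two distinct roots of this quadratic, monic up to sign, sum to `α d - 2 β`.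
    have hsum : ∀ s s', s ≠ s' → s + s' = α * d - 2 * β := fun s s' hss' => by
      have : (s - s') * (α * d - 2 * β - s - s') = 0 := by linear_combination h s - h s'
      linear_combination -((mul_eq_zero.1 this).resolve_left (sub_ne_zero.2 hss'))
    exact hyz (by linear_combination hsum x y hxy - hsum x z hxz)
  · exact one_ne_zero (by linear_combination h (-β) - h (1 - β) : (1 : K) = 0)

-- Moves the first and the last index of a `Unit ⊕ (ι ⊕ Unit)`-indexed matrix behind `ι`.
def borderEquiv (ι : Type*) : ι ⊕ Fin 2 ≃ Unit ⊕ (ι ⊕ Unit) where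
  toFun := Sum.elim (fun i => .inr (.inl i)) ![.inl (), .inr (.inr ())]
  invFun := Sum.elim (fun _ => .inr 0) (Sum.elim .inl fun _ => .inr 1)
  left_inv := by rintro (i | j) <;> [rfl; fin_cases j <;> rfl]
  right_inv := by rintro (⟨⟩ | i | ⟨⟩) <;> rfl

theorem stmt4_general {K : Type*} [Field K] (n r : ℕ)
    (L C : Fin (n - 2) → K) (a b c d : K)
    (B : Matrix (Fin (n - 2)) (Fin (n - 2)) K) (hB : B.IsSymm)
    (hrk : ∀ t : K,
      (Matrix.fromBlocks
          (Matrix.of fun (_ _ : Unit) => a)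
          (Matrix.of fun (_ : Unit) (j : Fin (n - 2) ⊕ Unit) => Sum.elim L (fun _ => b) j)
          (Matrix.of fun (i : Fin (n - 2) ⊕ Unit) (_ : Unit) => Sum.elim L (fun _ => b) i)
          (Matrix.fromBlocks B (Matrix.of fun i (_ : Unit) => C i)
            (Matrix.of fun (_ : Unit) j => C j) (Matrix.of fun (_ _ : Unit) => c))
        + t • Matrix.fromBlocks
          (Matrix.of fun (_ _ : Unit) => (0 : K))
          (Matrix.of fun (_ : Unit) (j : Fin (n - 2) ⊕ Unit) =>
            Sum.elim (fun _ => (0 : K)) (fun _ => 1) j)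
          (Matrix.of fun (i : Fin (n - 2) ⊕ Unit) (_ : Unit) =>
            Sum.elim (fun _ => (0 : K)) (fun _ => 1) i)
          (Matrix.fromBlocks (0 : Matrix (Fin (n - 2)) (Fin (n - 2)) K) 0 0
            (Matrix.of fun (_ _ : Unit) => d))).rank ≤ r)
    (hcase : (∃ x y z : K, x ≠ y ∧ x ≠ z ∧ y ≠ z) ∨ d = 0) :
    B.rank ≤ r - 2 := by
  obtain ⟨G, hG, hrank⟩ := hB.exists_rank_add_card_le_rank_fromBlocks (of fun i => ![L i, C i])
  obtain ⟨t, ht⟩ :=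
    exists_mul_add_mul_sub_sq_ne_zero (a - G 0 0) (b - G 0 1) (c - G 1 1) d hcase
  have hdet : IsUnit (!![a, b + t; b + t, c + t * d] - G).det := by
    rw [isUnit_iff_ne_zero, det_fin_two]
    simp only [Matrix.sub_apply, hG.apply 0 1]
    convert ht using 1
    simp only [of_apply, cons_val', cons_val_zero, cons_val_fin_one, cons_val_one]
    ring
  have hle := hrank _ hdet
  rw [Fintype.card_fin] at hle
  have hrk_t := hrk t
  rw [← rank_submatrix _ (borderEquiv _) (borderEquiv _)] at hrk_t
  refine Nat.le_sub_of_add_le (hle.trans (le_of_eq_of_le (congrArg rank ?_) hrk_t))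
  ext (i | i) (j | j) <;> (try fin_cases i) <;> (try fin_cases j) <;> simp [borderEquiv]

/-- Extraction lemma for symmetric matrices: if the `n × n` symmetric matrix
`A = [[a, L, b],[Lᵀ, B, C],[b, Cᵀ, c]]` satisfies `rank (A + t • N) ≤ r` for every `t`,
where `N` has entry `1` at positions `(1,n)` and `(n,1)`, entry `d` at `(n,n)` and zeroes
elsewhere, and if moreover `K` has more than two elements or `d = 0`,
then `rank B ≤ r − 2`. -/
theorem stmt4 {K : Type*} [Field K] (n r : ℕ) (hn : 3 ≤ n)
    (hr0 : 0 < r) (hrn : r < n)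
    (L C : Fin (n - 2) → K) (a b c d : K)
    (B : Matrix (Fin (n - 2)) (Fin (n - 2)) K) (hB : B.IsSymm)
    (hrk : ∀ t : K,
      (Matrix.fromBlocks
          (Matrix.of fun (_ _ : Unit) => a)
          (Matrix.of fun (_ : Unit) (j : Fin (n - 2) ⊕ Unit) => Sum.elim L (fun _ => b) j)
          (Matrix.of fun (i : Fin (n - 2) ⊕ Unit) (_ : Unit) => Sum.elim L (fun _ => b) i)
          (Matrix.fromBlocks B (Matrix.of fun i (_ : Unit) => C i)
            (Matrix.of fun (_ : Unit) j => C j) (Matrix.of fun (_ _ : Unit) => c))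
        + t • Matrix.fromBlocks
          (Matrix.of fun (_ _ : Unit) => (0 : K))
          (Matrix.of fun (_ : Unit) (j : Fin (n - 2) ⊕ Unit) =>
            Sum.elim (fun _ => (0 : K)) (fun _ => 1) j)
          (Matrix.of fun (i : Fin (n - 2) ⊕ Unit) (_ : Unit) =>
            Sum.elim (fun _ => (0 : K)) (fun _ => 1) i)
          (Matrix.fromBlocks (0 : Matrix (Fin (n - 2)) (Fin (n - 2)) K) 0 0
            (Matrix.of fun (_ _ : Unit) => d))).rank ≤ r)
    (hcase : (∃ x y z : K, x ≠ y ∧ x ≠ z ∧ y ≠ z) ∨ d = 0) :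
    B.rank ≤ r - 2 :=
  stmt4_general n r L C a b c d B hB hrk hcase
end

section
/- Let K be a field, n ≥ 2 an integer, and r a positive integer with r < n. Let A be an n×n symmetric matrix over K, written in block form A = [[P, C],[Cᵀ, a]] with P an (n-1)×(n-1) symmetric matrix, C ∈ K^{n-1} and a ∈ K. If rank(A + t·E_{n,n}) ≤ r for every t ∈ K, then rank(P) ≤ r − 1. -/
/-! Let `W` be the span of the first `n - 1` columns, which all the matrices `A + t • Eₙₙ`
share; deleting the last coordinate maps `W` onto the column space of `P`. If `eₙ ∈ W`, this
projection has a kernel on `W`, so `rank P < dim W ≤ rank A`. Otherwise, since the last columns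
of `A` and `A + Eₙₙ` differ by `eₙ`, one of them lies outside `W`, and that matrix has rank
`> dim W ≥ rank P`. -/

open Matrix Module

theorem Submodule.finrank_map_lt_of_mem_ker {K V V' : Type*} [Field K] [AddCommGroup V]
    [Module K V] [AddCommGroup V'] [Module K V'] (f : V →ₗ[K] V') {S : Submodule K V}
    [FiniteDimensional K S] {x : V} (hxS : x ∈ S) (hx : x ≠ 0) (hfx : f x = 0) :
    finrank K (S.map f) < finrank K S := by
  have hker : LinearMap.ker (f.domRestrict S) ≠ ⊥ :=
    (Submodule.ne_bot_iff _).2 ⟨⟨x, hxS⟩, by simpa using hfx, by simpa using hx⟩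
  have hrank := (f.domRestrict S).finrank_range_add_finrank_ker
  rw [LinearMap.range_domRestrict] at hrank
  have hpos := Submodule.finrank_eq_zero.not.2 hker
  omega

namespace Matrix

variable {R K l m n : Type*} [CommSemiring R] [Field K] [Fintype m]

theorem range_mulVecLin_le_range_mulVecLin_fromCols [Fintype n] (A : Matrix l m R)
    (B : Matrix l n R) :
    LinearMap.range A.mulVecLin ≤ LinearMap.range (fromCols A B).mulVecLin := by
  rintro _ ⟨x, rfl⟩
  exact ⟨Sum.elim x 0, by simp⟩

theorem map_funLeft_inl_range_mulVecLin_fromRows (A : Matrix l m R) (C : Matrix n m R) :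
    (LinearMap.range (fromRows A C).mulVecLin).map (LinearMap.funLeft R R Sum.inl) =
      LinearMap.range A.mulVecLin := by
  rw [← LinearMap.range_comp]
  congr 1

theorem rank_lt_max_rank_fromBlocks (A : Matrix l m K) (B : Matrix l Unit K)
    (C : Matrix Unit m K) {D D' : Matrix Unit Unit K} (hD : D ≠ D') :
    A.rank < max (fromBlocks A B C D).rank (fromBlocks A B C D').rank := by
  set W := LinearMap.range (fromRows A C).mulVecLin
  have hW : ∀ D, W ≤ LinearMap.range (fromBlocks A B C D).mulVecLin := fun D => by
    rw [← fromCols_fromRows_eq_fromBlocks]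
    exact range_mulVecLin_le_range_mulVecLin_fromCols _ _
  have hAW : A.rank ≤ finrank K W := by
    rw [rank, ← map_funLeft_inl_range_mulVecLin_fromRows A C]
    exact Submodule.finrank_map_le _ _
  set e : l ⊕ Unit → K := Sum.elim 0 1
  set v : m ⊕ Unit → K := Sum.elim 0 1
  by_cases he : e ∈ W
  · have hAW' : A.rank < finrank K W := by
      rw [rank, ← map_funLeft_inl_range_mulVecLin_fromRows A C]
      refine Submodule.finrank_map_lt_of_mem_ker _ he ?_ ?_
      · simpa [e] using fun h => one_ne_zero (congrFun h (Sum.inr ()))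
      · ext i; simp [e]
    exact lt_max_of_lt_left (hAW'.trans_le (Submodule.finrank_mono (hW D)))
  · have hlt : ∀ D, fromBlocks A B C D *ᵥ v ∉ W → A.rank < (fromBlocks A B C D).rank :=
      fun D hv => hAW.trans_lt <| Submodule.finrank_lt_finrank_of_lt <|
        SetLike.lt_iff_le_and_exists.2 ⟨hW D, _, LinearMap.mem_range_self _ _, hv⟩
    have hdiff :
        fromBlocks A B C D *ᵥ v - fromBlocks A B C D' *ᵥ v = (D () () - D' () ()) • e := by
      ext (i | i) <;> simp [e, v, fromBlocks_mulVec, mulVec, dotProduct]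
    have hne : D () () - D' () () ≠ 0 := sub_ne_zero.2 fun h => hD (ext fun _ _ => h)
    by_cases hv : fromBlocks A B C D *ᵥ v ∈ W
    · refine lt_max_of_lt_right (hlt D' fun hv' => he ?_)
      have he' := W.smul_mem (D () () - D' () ())⁻¹ (W.sub_mem hv hv')
      rwa [hdiff, smul_smul, inv_mul_cancel₀ hne, one_smul] at he'
    · exact lt_max_of_lt_left (hlt D hv)

end Matrix

theorem stmt5_general {K : Type*} [Field K] (n r : ℕ)
    (P : Matrix (Fin (n - 1)) (Fin (n - 1)) K)
    (C : Fin (n - 1) → K) (a : K)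
    (hrk : ∀ t : K,
      (Matrix.fromBlocks P (Matrix.of fun i (_ : Unit) => C i)
          (Matrix.of fun (_ : Unit) j => C j) (Matrix.of fun (_ _ : Unit) => a)
        + t • Matrix.fromBlocks (0 : Matrix (Fin (n - 1)) (Fin (n - 1)) K) 0 0
          (Matrix.of fun (_ _ : Unit) => (1 : K))).rank ≤ r) :
    P.rank ≤ r - 1 := by
  have hlt := rank_lt_max_rank_fromBlocks P (of fun i (_ : Unit) => C i)
    (of fun (_ : Unit) j => C j) (D := of fun _ _ => a) (D' := (of fun _ _ => a) + of fun _ _ => 1)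
    fun h => by simpa using congrFun₂ h () ()
  have h0 := hrk 0
  have h1 := hrk 1
  simp only [zero_smul, add_zero, one_smul, fromBlocks_add] at h0 h1
  omega

/-- If the `n × n` symmetric matrix `A = [[P, C],[Cᵀ, a]]` satisfies
`rank (A + t • Eₙₙ) ≤ r` for every `t`, then `rank P ≤ r − 1`. -/
theorem stmt5 {K : Type*} [Field K] (n r : ℕ) (hn : 2 ≤ n)
    (hr0 : 0 < r) (hrn : r < n)
    (P : Matrix (Fin (n - 1)) (Fin (n - 1)) K) (hP : P.IsSymm)
    (C : Fin (n - 1) → K) (a : K)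
    (hrk : ∀ t : K,
      (Matrix.fromBlocks P (Matrix.of fun i (_ : Unit) => C i)
          (Matrix.of fun (_ : Unit) j => C j) (Matrix.of fun (_ _ : Unit) => a)
        + t • Matrix.fromBlocks (0 : Matrix (Fin (n - 1)) (Fin (n - 1)) K) 0 0
          (Matrix.of fun (_ _ : Unit) => (1 : K))).rank ≤ r) :
    P.rank ≤ r - 1 :=
  stmt5_general n r P C a hrk
end

section
/- Let K be a field, n ≥ 3 an integer, r ≥ 2 an integer, and (i,j) ∈ {1,…,n}² with i ≠ j. Let M be an n×n symmetric matrix over K such that rank(M + t·(E_{i,j} + E_{j,i})) ≤ r for every t ∈ K. Then the (n-2)×(n-2) submatrix M_{i,j} of M obtained by deleting the i-th and j-th rows and the i-th and j-th columns of M satisfies rank(M_{i,j}) ≤ r − 2. -/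
/-!
A symmetric matrix `N` has an invertible principal submatrix `D` of size `rank N`. Apply this to
the submatrix `N` of `M` avoiding `i` and `j`, and adjoin `i` and `j` to the index set of `D`: the
resulting principal submatrix of `M + t (E_ij + E_ji)` has determinant
`det D * det (S + t [[0, 1], [1, 0]])`, with `S` the symmetric `2 × 2` Schur complement of `D`.
Since `det (S + t [[0, 1], [1, 0]]) = s₀₀ s₁₁ - (s₀₁ + t)²`, one of `t = -s₀₁`, `t = 1 - s₀₁`
makes it nonzero, so `rank N + 2 ≤ rank (M + t (E_ij + E_ji)) ≤ r`.
-/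

open Matrix Function

theorem Matrix.submatrix_single_of_injective {l m n o α : Type*} [DecidableEq l] [DecidableEq m]
    [DecidableEq n] [DecidableEq o] [Zero α] {f : l → m} {g : n → o} (hf : Injective f)
    (hg : Injective g) (i : l) (j : n) (c : α) :
    (single (f i) (g j) c).submatrix f g = single i j c := by
  ext a b
  simp [single_apply, hf.eq_iff, hg.eq_iff]

section Field

variable {K : Type*} [Field K]

theorem Matrix.IsSymm.exists_det_add_smul_ne_zero_fin_two {S : Matrix (Fin 2) (Fin 2) K}
    (hS : S.IsSymm) : ∃ t : K, (S + t • !![0, 1; 1, 0]).det ≠ 0 := by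
  have hS10 : S 1 0 = S 0 1 := hS.apply 0 1
  by_cases h : S 0 0 * S 1 1 = 0
  · refine ⟨1 - S 0 1, ?_⟩
    simp [det_fin_two, hS10, h]
  · refine ⟨-S 0 1, ?_⟩
    simpa [det_fin_two, hS10] using h

theorem Matrix.IsSymm.exists_det_add_smul_single_ne_zero {m : Type*} [Fintype m] [DecidableEq m]
    {P : Matrix (Fin 2 ⊕ m) (Fin 2 ⊕ m) K} (hP : P.IsSymm) (hD : IsUnit P.toBlocks₂₂) :
    ∃ t : K,
      (P + t • (single (Sum.inl 0) (Sum.inl 1) 1 + single (Sum.inl 1) (Sum.inl 0) 1)).det ≠ 0 := by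
  rw [← P.fromBlocks_toBlocks] at hP ⊢
  obtain ⟨hA, hBC, -, hDsymm⟩ := isSymm_fromBlocks_iff.1 hP
  have hdet := (isUnit_iff_isUnit_det _).1 hD
  let := invertibleOfIsUnitDet _ hdet
  have hS : (P.toBlocks₁₁ - P.toBlocks₁₂ * ⅟P.toBlocks₂₂ * P.toBlocks₂₁).IsSymm := by
    refine hA.sub ?_
    rw [invOf_eq_nonsing_inv, ← hBC]
    simp [IsSymm, Matrix.transpose_mul, hDsymm.inv.eq, Matrix.mul_assoc]
  obtain ⟨t, ht⟩ := hS.exists_det_add_smul_ne_zero_fin_two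
  have hE : (single (Sum.inl 0) (Sum.inl 1) 1 + single (Sum.inl 1) (Sum.inl 0) 1 :
      Matrix (Fin 2 ⊕ m) (Fin 2 ⊕ m) K) = Matrix.fromBlocks !![0, 1; 1, 0] 0 0 0 := by
    ext (a | a) (b | b) <;> try fin_cases a <;> try fin_cases b
    all_goals simp
  refine ⟨t, ?_⟩
  rw [hE, fromBlocks_smul, fromBlocks_add]
  simp only [smul_zero, add_zero]
  rw [det_fromBlocks₂₂, add_sub_right_comm]
  exact mul_ne_zero hdet.ne_zero ht

theorem Matrix.IsSymm.exists_isUnit_submatrix {ι : Type*} [Fintype ι] [DecidableEq ι]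
    {N : Matrix ι ι K} (hN : N.IsSymm) :
    ∃ k : Fin N.rank → ι, Injective k ∧ IsUnit (N.submatrix k k) := by
  classical
  obtain ⟨κ, a, ha, hspan, hli⟩ := exists_linearIndependent' K N.row
  let : Fintype κ := Fintype.ofInjective a ha
  have hC : ∀ l, ∃ c : κ → K, ∑ v, c v • N (a v) = N l := fun l =>
    (Submodule.mem_span_range_iff_exists_fun K).1 (hspan ▸ Submodule.subset_span ⟨l, rfl⟩)
  choose C hC using hC
  have hNC : N = of C * N.submatrix a id := by
    ext l x
    simpa [mul_apply, Finset.sum_apply] using (congrFun (hC l) x).symm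
  -- Symmetry turns the factorisation of the rows into one of the columns.
  have hR : N.submatrix a id = N.submatrix a a * (of C)ᵀ := by
    have hcols : N.submatrix id a = of C * N.submatrix a a := by
      conv_lhs => rw [hNC]
      ext; simp [mul_apply]
    rw [← (hN.submatrix a).eq, ← transpose_mul, ← hcols, transpose_submatrix, hN.eq]
  have hunit : IsUnit (N.submatrix a a) := by
    have hrows : (of C)ᵀ.vecMulLinear ∘ (N.submatrix a a).row = N.row ∘ a :=
      funext fun v => congrFun hR.symm v
    exact linearIndependent_rows_iff_isUnit.1 (.of_comp _ (hrows ▸ hli))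
  have hrank : Fintype.card κ = N.rank := by
    refine le_antisymm ?_ ?_
    · rw [← rank_of_isUnit _ hunit]
      exact rank_submatrix_le _ _ _
    · calc N.rank ≤ (N.submatrix a id).rank :=
            (congrArg rank hNC).trans_le (rank_mul_le_right _ _)
        _ = Fintype.card κ := hli.rank_matrix
  let e := Fintype.equivFinOfCardEq hrank
  refine ⟨a ∘ e.symm, ha.comp e.symm.injective, ?_⟩
  rw [← submatrix_submatrix]
  exact (isUnit_submatrix_equiv _ _).2 hunit

end Field

theorem stmt6_general {K : Type*} [Field K] (n r : ℕ)
    (i j : Fin n) (hij : i ≠ j)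
    (M : Matrix (Fin n) (Fin n) K) (hM : M.IsSymm)
    (hrk : ∀ t : K,
      (M + t • (Matrix.single i j (1 : K) +
        Matrix.single j i (1 : K))).rank ≤ r) :
    (M.submatrix (fun k : {k : Fin n // k ≠ i ∧ k ≠ j} => (k : Fin n))
      (fun k : {k : Fin n // k ≠ i ∧ k ≠ j} => (k : Fin n))).rank ≤ r - 2 := by
  set N := M.submatrix (fun k : {k : Fin n // k ≠ i ∧ k ≠ j} => (k : Fin n))
    (fun k : {k : Fin n // k ≠ i ∧ k ≠ j} => (k : Fin n))
  obtain ⟨k, hk, hD⟩ := (hM.submatrix _).exists_isUnit_submatrix (N := N)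
  let ρ : Fin 2 ⊕ Fin N.rank → Fin n := Sum.elim ![i, j] (Subtype.val ∘ k)
  have hρ : Injective ρ := by
    refine Injective.sumElim ?_ (Subtype.val_injective.comp hk) fun a b => ?_
    · intro a b
      fin_cases a <;> fin_cases b <;> simp [hij, hij.symm]
    · fin_cases a
      exacts [(k b).2.1.symm, (k b).2.2.symm]
  obtain ⟨t, ht⟩ := (hM.submatrix ρ).exists_det_add_smul_single_ne_zero hD
  set Mt := M + t • (single i j (1 : K) + single j i 1)
  have hsub : Mt.submatrix ρ ρ = M.submatrix ρ ρ +
      t • (single (Sum.inl 0) (Sum.inl 1) 1 + single (Sum.inl 1) (Sum.inl 0) 1) := by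
    rw [submatrix_add, submatrix_smul, submatrix_add,
      ← submatrix_single_of_injective hρ hρ (Sum.inl 0) (Sum.inl 1),
      ← submatrix_single_of_injective hρ hρ (Sum.inl 1) (Sum.inl 0)]
    rfl
  have hrank : N.rank + 2 ≤ Mt.rank :=
    calc N.rank + 2 = Fintype.card (Fin 2 ⊕ Fin N.rank) := by simp [add_comm]
      _ = (Mt.submatrix ρ ρ).rank := (rank_of_det_ne_zero (hsub ▸ ht)).symm
      _ ≤ Mt.rank := rank_submatrix_le _ _ _
  exact Nat.le_sub_of_add_le (hrank.trans (hrk t))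

/-- If `M` is an `n × n` symmetric matrix such that
`rank (M + t • (E i j + E j i)) ≤ r` for every `t` (where `i ≠ j`), then the submatrix
of `M` obtained by deleting the `i`-th and `j`-th rows and columns has rank at most
`r − 2`. -/
theorem stmt6 {K : Type*} [Field K] (n r : ℕ) (hn : 3 ≤ n) (hr : 2 ≤ r)
    (i j : Fin n) (hij : i ≠ j)
    (M : Matrix (Fin n) (Fin n) K) (hM : M.IsSymm)
    (hrk : ∀ t : K,
      (M + t • (Matrix.single i j (1 : K) +
        Matrix.single j i (1 : K))).rank ≤ r) :
    (M.submatrix (fun k : {k : Fin n // k ≠ i ∧ k ≠ j} => (k : Fin n))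
      (fun k : {k : Fin n // k ≠ i ∧ k ≠ j} => (k : Fin n))).rank ≤ r - 2 :=
  stmt6_general n r i j hij M hM hrk
end

section
/- Let K be a field of characteristic 2, n ≥ 2 an integer, and r a positive integer with r < n. Let A be an n×n symmetric matrix over K, written in block form A = [[P, C₀],[C₀ᵀ, a₀]] with P an (n-1)×(n-1) symmetric matrix, C₀ ∈ K^{n-1} and a₀ ∈ K. Let C ∈ K^{n-1} and set N = [[0_{(n-1)×(n-1)}, C],[Cᵀ, 1]]. If rank(A + t·N) ≤ r for every t ∈ K, then rank(P + C·Cᵀ) ≤ r − 1. -/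
open Matrix

/-! Write `B(v, d)` for the bordered matrix `[[P, v], [vᵀ, d]]`, so that
`A + t • N = B(C₀ + t C, a₀ + t)`. Adding one column and then one row,
`rank B(v, d) = rank P + [v ∉ col P] + [∄ z, Pᵀ z = v ∧ vᵀ z = d]`.
For symmetric `P` in characteristic 2, solutions `z` for `(C₀, a₀)` and `z'` for
`(C₀ + C, a₀ + 1)` give the solution `z' - z` for `(C, 1)`; comparing the three rank formulas
case by case yields `rank B(C, 1) ≤ max (rank A) (rank (A + N)) ≤ r`. Finally, the Schur
complement of the corner `1` gives `rank B(C, 1) = rank (P - C Cᵀ) + 1 = rank (P + C Cᵀ) + 1`.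
-/

namespace Matrix

section Rank

variable {K : Type*} [Field K] {m n : Type*} [Fintype n]

lemma range_mulVecLin_fromCols {n' : Type*} [Fintype n'] (A : Matrix m n K) (B : Matrix m n' K) :
    LinearMap.range (fromCols A B).mulVecLin =
      LinearMap.range A.mulVecLin ⊔ LinearMap.range B.mulVecLin := by
  apply le_antisymm
  · rintro _ ⟨x, rfl⟩
    rw [mulVecLin_apply, fromCols_mulVec]
    exact Submodule.add_mem_sup (LinearMap.mem_range_self _ _) (LinearMap.mem_range_self _ _)
  · refine sup_le ?_ ?_ <;> rintro _ ⟨x, rfl⟩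
    · exact ⟨Sum.elim x 0, by simp⟩
    · exact ⟨Sum.elim 0 x, by simp⟩

lemma range_mulVecLin_replicateCol (v : m → K) :
    LinearMap.range (replicateCol Unit v).mulVecLin = K ∙ v := by
  ext w
  simp only [LinearMap.mem_range, mulVecLin_apply, Submodule.mem_span_singleton]
  constructor
  · rintro ⟨x, rfl⟩
    exact ⟨x (), by ext; simp [mulVec, dotProduct, mul_comm]⟩
  · rintro ⟨a, rfl⟩
    exact ⟨fun _ => a, by ext; simp [mulVec, dotProduct, mul_comm]⟩

open Classical in
lemma rank_fromCols_replicateCol [Finite m] (A : Matrix m n K) (v : m → K) :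
    (fromCols A (replicateCol Unit v)).rank =
      A.rank + if v ∈ LinearMap.range A.mulVecLin then 0 else 1 := by
  rw [rank, range_mulVecLin_fromCols, range_mulVecLin_replicateCol, rank]
  split_ifs with hv
  · rw [sup_eq_left.mpr ((Submodule.span_singleton_le_iff_mem _ _).mpr hv), add_zero]
  · exact Submodule.finrank_sup_span_singleton hv

open Classical in
lemma rank_fromRows_replicateRow [Fintype m] (A : Matrix m n K) (w : n → K) :
    (fromRows A (replicateRow Unit w)).rank =
      A.rank + if w ∈ LinearMap.range Aᵀ.mulVecLin then 0 else 1 := by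
  rw [← rank_transpose, transpose_fromRows, transpose_replicateRow, rank_fromCols_replicateCol,
    rank_transpose]

end Rank

def bordered {m α : Type*} (P : Matrix m m α) (u : m → α) (d : α) :
    Matrix (m ⊕ Unit) (m ⊕ Unit) α :=
  fromBlocks P (replicateCol Unit u) (replicateRow Unit u) (of fun _ _ => d)

lemma bordered_eq_fromRows {m α : Type*} (P : Matrix m m α) (u : m → α) (d : α) :
    bordered P u d =
      fromRows (fromCols P (replicateCol Unit u)) (replicateRow Unit (Sum.elim u fun _ => d)) := by
  ext (i | i) (j | j) <;> rfl

section Bordered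

variable {K : Type*} [Field K] {m : Type*} [Fintype m]

open Classical in
lemma rank_bordered (P : Matrix m m K) (u : m → K) (d : K) :
    (bordered P u d).rank = P.rank + (if u ∈ LinearMap.range P.mulVecLin then 0 else 1) +
      (if ∃ z, Pᵀ *ᵥ z = u ∧ u ⬝ᵥ z = d then 0 else 1) := by
  have hrow : Sum.elim u (fun _ => d) ∈
      LinearMap.range (fromCols P (replicateCol Unit u))ᵀ.mulVecLin ↔
        ∃ z, Pᵀ *ᵥ z = u ∧ u ⬝ᵥ z = d := by
    simp [transpose_fromCols, fromRows_mulVec, funext_iff, mulVec, dotProduct]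
  rw [bordered_eq_fromRows, rank_fromRows_replicateRow, rank_fromCols_replicateCol]
  simp only [hrow]

open Classical in
lemma rank_bordered_of_mem (P : Matrix m m K) {u : m → K}
    (hu : u ∈ LinearMap.range P.mulVecLin) (d : K) :
    (bordered P u d).rank =
      P.rank + if ∃ z, Pᵀ *ᵥ z = u ∧ u ⬝ᵥ z = d then 0 else 1 := by
  rw [rank_bordered, if_pos hu, add_zero]

lemma rank_bordered_of_notMem {P : Matrix m m K} (hP : P.IsSymm) {u : m → K}
    (hu : u ∉ LinearMap.range P.mulVecLin) (d : K) : (bordered P u d).rank = P.rank + 2 := by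
  have hsol : ¬∃ z, Pᵀ *ᵥ z = u ∧ u ⬝ᵥ z = d := by
    rintro ⟨z, hz, -⟩
    exact hu ⟨z, by rwa [hP.eq] at hz⟩
  rw [rank_bordered, if_neg hu, if_neg hsol]

lemma rank_bordered_one [DecidableEq m] (P : Matrix m m K) (w : m → K) :
    (bordered P w 1).rank = (P - vecMulVec w w).rank + 1 := by
  have hone : (of fun _ _ : Unit => (1 : K)) = 1 := by ext; simp
  have hdet : ∀ (B : Matrix m Unit K) (C : Matrix Unit m K),
      IsUnit (fromBlocks 1 B 0 1).det ∧ IsUnit (fromBlocks 1 0 C 1).det := fun B C => by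
    simp
  let _ : Invertible (1 : Matrix Unit Unit K) := invertibleOne
  rw [bordered, hone, fromBlocks_eq_of_invertible₂₂, invOf_one, Matrix.mul_one, Matrix.one_mul,
    ← vecMulVec_eq, rank_mul_eq_left_of_isUnit_det _ _ (hdet 0 _).2,
    rank_mul_eq_right_of_isUnit_det _ _ (hdet _ 0).1, ← replicateCol_zero, ← replicateRow_zero,
    ← hone, ← bordered, rank_bordered]
  simp

lemma IsSymm.mulVec_sub_eq_and_dotProduct_sub_eq_one [CharP K 2] {P : Matrix m m K}
    (hP : P.IsSymm) {u C z z' : m → K} {a : K} (hz : P *ᵥ z = u ∧ u ⬝ᵥ z = a)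
    (hz' : P *ᵥ z' = u + C ∧ (u + C) ⬝ᵥ z' = a + 1) :
    P *ᵥ (z' - z) = C ∧ C ⬝ᵥ (z' - z) = 1 := by
  obtain ⟨rfl, rfl⟩ := hz
  obtain ⟨hPz', hdot⟩ := hz'
  refine ⟨by rw [mulVec_sub, hPz', add_sub_cancel_left], ?_⟩
  have hsymm : (P *ᵥ z) ⬝ᵥ z' = z ⬝ᵥ (P *ᵥ z') := by
    rw [dotProduct_comm, dotProduct_mulVec, ← mulVec_transpose, hP.eq, dotProduct_comm]
  rw [hPz', dotProduct_add, dotProduct_comm z, dotProduct_comm z C] at hsymm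
  rw [add_dotProduct] at hdot
  rw [dotProduct_sub]
  linear_combination hdot - hsymm - (C ⬝ᵥ z) * CharTwo.two_eq_zero (R := K)

lemma rank_bordered_one_le_max [CharP K 2] {P : Matrix m m K} (hP : P.IsSymm)
    (u C : m → K) (a : K) :
    (bordered P C 1).rank ≤ max (bordered P u a).rank (bordered P (u + C) (a + 1)).rank := by
  by_cases hC : C ∈ LinearMap.range P.mulVecLin
  · by_cases hu : u ∈ LinearMap.range P.mulVecLin
    · rw [rank_bordered_of_mem P hC, rank_bordered_of_mem P hu,
        rank_bordered_of_mem P (add_mem hu hC), hP.eq]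
      by_cases hsolC : ∃ z, P *ᵥ z = C ∧ C ⬝ᵥ z = 1
      · rw [if_pos hsolC]
        split_ifs <;> omega
      rw [if_neg hsolC]
      by_cases hsolu : ∃ z, P *ᵥ z = u ∧ u ⬝ᵥ z = a
      · obtain ⟨z, hz⟩ := hsolu
        have hsoluC : ¬∃ z', P *ᵥ z' = u + C ∧ (u + C) ⬝ᵥ z' = a + 1 :=
          fun ⟨_, hz'⟩ => hsolC ⟨_, hP.mulVec_sub_eq_and_dotProduct_sub_eq_one hz hz'⟩
        rw [if_neg hsoluC]
        omega
      · rw [if_neg hsolu]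
        omega
    · rw [rank_bordered_of_mem P hC, rank_bordered_of_notMem hP hu]
      split_ifs <;> omega
  · rw [rank_bordered_of_notMem hP hC]
    by_cases hu : u ∈ LinearMap.range P.mulVecLin
    · have huC : u + C ∉ LinearMap.range P.mulVecLin := fun huC =>
        hC (by simpa using sub_mem huC hu)
      rw [rank_bordered_of_notMem hP huC]
      omega
    · rw [rank_bordered_of_notMem hP hu]
      omega

end Bordered

end Matrix

theorem stmt7_general {K : Type*} [Field K] (hchar : ringChar K = 2) (n r : ℕ)
    (P : Matrix (Fin (n - 1)) (Fin (n - 1)) K) (hP : P.IsSymm)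
    (C₀ C : Fin (n - 1) → K) (a₀ : K)
    (hrk : ∀ t : K,
      (Matrix.fromBlocks P (Matrix.of fun i (_ : Unit) => C₀ i)
          (Matrix.of fun (_ : Unit) j => C₀ j) (Matrix.of fun (_ _ : Unit) => a₀)
        + t • Matrix.fromBlocks (0 : Matrix (Fin (n - 1)) (Fin (n - 1)) K)
          (Matrix.of fun i (_ : Unit) => C i)
          (Matrix.of fun (_ : Unit) j => C j)
          (Matrix.of fun (_ _ : Unit) => (1 : K))).rank ≤ r) :
    (P + Matrix.vecMulVec C C).rank ≤ r - 1 := by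
  have : CharP K 2 := ringChar.eq_iff.mp hchar
  have hpencil : ∀ t : K, (bordered P (C₀ + t • C) (a₀ + t)).rank ≤ r := fun t => by
    convert hrk t using 2
    ext (i | i) (j | j) <;> simp [bordered]
  have hsub : P - vecMulVec C C = P + vecMulVec C C := by
    ext i j
    exact CharTwo.sub_eq_add _ _
  have hrank : (P + vecMulVec C C).rank + 1 ≤ r := calc
    (P + vecMulVec C C).rank + 1 = (bordered P C 1).rank := by
      rw [rank_bordered_one, hsub]
    _ ≤ max (bordered P C₀ a₀).rank (bordered P (C₀ + C) (a₀ + 1)).rank :=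
      rank_bordered_one_le_max hP C₀ C a₀
    _ ≤ r := max_le (by simpa using hpencil 0) (by simpa using hpencil 1)
  omega

/-- Over a field of characteristic 2: if the `n × n` symmetric matrix
`A = [[P, C₀],[C₀ᵀ, a₀]]` satisfies `rank (A + t • N) ≤ r` for every `t`, where
`N = [[0, C],[Cᵀ, 1]]`, then `rank (P + C·Cᵀ) ≤ r − 1`. -/
theorem stmt7 {K : Type*} [Field K] (hchar : ringChar K = 2) (n r : ℕ) (hn : 2 ≤ n)
    (hr0 : 0 < r) (hrn : r < n)
    (P : Matrix (Fin (n - 1)) (Fin (n - 1)) K) (hP : P.IsSymm)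
    (C₀ C : Fin (n - 1) → K) (a₀ : K)
    (hrk : ∀ t : K,
      (Matrix.fromBlocks P (Matrix.of fun i (_ : Unit) => C₀ i)
          (Matrix.of fun (_ : Unit) j => C₀ j) (Matrix.of fun (_ _ : Unit) => a₀)
        + t • Matrix.fromBlocks (0 : Matrix (Fin (n - 1)) (Fin (n - 1)) K)
          (Matrix.of fun i (_ : Unit) => C i)
          (Matrix.of fun (_ : Unit) j => C j)
          (Matrix.of fun (_ _ : Unit) => (1 : K))).rank ≤ r) :
    (P + Matrix.vecMulVec C C).rank ≤ r - 1 :=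
  stmt7_general hchar n r P hP C₀ C a₀ hrk
end

section
/- Let K be a field of characteristic different from 2, and let n and s be non-negative integers with 2s ≤ n. Let 𝒮 be a non-empty affine subspace of the space of n×n symmetric matrices over K, and let S denote its translation vector space (direction). Assume that for every linear hyperplane H of Kⁿ, the subspace S_H = {N ∈ S : XᵀNY = 0 for all X, Y ∈ H} has dimension at least s. Then 𝒮 contains a matrix of rank at least 2s. -/
/-!
Take `M ∈ 𝒮` of maximal rank `r`; if `r = n` there is nothing to prove. Otherwise choose
`v ∉ range M` and `z ∈ ker M` with `v ⬝ᵥ z = 1` (possible as `M` is symmetric), and let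
`H = v^⊥`.
Every `N ∈ S_H` maps `H` into `K v`, so `range M ≤ range (M + N) ⊔ K v`, and maximality of `r`
forces `v ∉ range (M + N)`. Consequently, if `u ∈ H` and `N z - M u ∈ K v`, then
`(M + N) (z - u) = 0`, whence `zᵀ N z = uᵀ M u`. Comparing this for `(N, y)` and `(-N, -y)`
shows, in characteristic `≠ 2`, that the subspace `Y` of such `y` is totally isotropic for `M`,
so `2 dim M(Y) ≤ r`. Finally `N ↦ N z` embeds `S_H` into `M(Y) ⊔ K v` avoiding `K v`, hence
`2 dim S_H ≤ r`, and the hypothesis for `H` gives `2 s ≤ r`.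
-/

open Matrix

def matHyp {K : Type*} [Field K] {n : ℕ} (D : Submodule K (Matrix (Fin n) (Fin n) K))
    (H : Submodule K (Fin n → K)) : Submodule K (Matrix (Fin n) (Fin n) K) where
  carrier := {N | N ∈ D ∧ ∀ X ∈ H, ∀ Y ∈ H, X ⬝ᵥ N *ᵥ Y = 0}
  add_mem' := by
    rintro a b ⟨haD, ha⟩ ⟨hbD, hb⟩
    refine ⟨D.add_mem haD hbD, fun X hX Y hY => ?_⟩
    rw [Matrix.add_mulVec, dotProduct_add, ha X hX Y hY, hb X hX Y hY, add_zero]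
  zero_mem' := by
    refine ⟨D.zero_mem, fun X hX Y hY => ?_⟩
    rw [Matrix.zero_mulVec, dotProduct_zero]
  smul_mem' := by
    rintro c a ⟨haD, ha⟩
    refine ⟨D.smul_mem c haD, fun X hX Y hY => ?_⟩
    rw [Matrix.smul_mulVec, dotProduct_smul, ha X hX Y hY, smul_zero]

open Module Submodule

section Subspaces

variable {K V W : Type*} [DivisionRing K] [AddCommGroup V] [Module K V] [FiniteDimensional K V]
  [AddCommGroup W] [Module K W]

theorem LinearMap.finrank_map_add_finrank_inf_ker (f : V →ₗ[K] W) (p : Submodule K V) :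
    finrank K (p.map f) + finrank K (p ⊓ LinearMap.ker f : Submodule K V) = finrank K p := by
  have h := (f.domRestrict p).finrank_range_add_finrank_ker
  rwa [LinearMap.range_domRestrict, LinearMap.ker_domRestrict,
    ← finrank_map_subtype_eq, map_comap_subtype] at h

theorem Submodule.finrank_le_of_le_sup_of_disjoint {A B C : Submodule K V} (hAC : Disjoint A C)
    (hABC : A ≤ B ⊔ C) : finrank K A ≤ finrank K B := by
  have h₁ := finrank_sup_add_finrank_inf_eq A C
  have h₂ := finrank_add_le_finrank_add_finrank B C
  have h₃ := finrank_mono (sup_le hABC le_sup_right : A ⊔ C ≤ B ⊔ C)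
  rw [hAC.eq_bot, finrank_bot] at h₁
  omega

theorem Submodule.notMem_of_le_sup_span_singleton {A B : Submodule K V} {v : V} (hvA : v ∉ A)
    (hAB : A ≤ B ⊔ K ∙ v) (hBA : finrank K B ≤ finrank K A) : v ∉ B := by
  intro hvB
  have hv0 : v ≠ 0 := by rintro rfl; exact hvA A.zero_mem
  have hvB' : K ∙ v ≤ B := (span_singleton_le_iff_mem _ _).2 hvB
  have h₁ := finrank_sup_add_finrank_inf_eq A (K ∙ v)
  rw [((disjoint_span_singleton' hv0).2 hvA).eq_bot, finrank_bot,
    finrank_span_singleton hv0] at h₁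
  have h₂ := finrank_mono (sup_le (hAB.trans (sup_le le_rfl hvB')) hvB')
  omega

end Subspaces

section DotOrthogonal

variable {K ι : Type*} [Field K] [Fintype ι] [DecidableEq ι]

def dotOrthogonal (U : Submodule K (ι → K)) : Submodule K (ι → K) :=
  (U.map (dotProductEquiv K ι).toLinearMap).dualCoannihilator

theorem mem_dotOrthogonal {U : Submodule K (ι → K)} {x : ι → K} :
    x ∈ dotOrthogonal U ↔ ∀ u ∈ U, u ⬝ᵥ x = 0 := by
  simp only [dotOrthogonal, mem_dualCoannihilator, mem_map]
  exact ⟨fun h u hu => h _ ⟨u, hu, rfl⟩, fun h _ ⟨u, hu, hφ⟩ => hφ ▸ h u hu⟩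

theorem mem_dotOrthogonal_span_singleton {v x : ι → K} :
    x ∈ dotOrthogonal (K ∙ v) ↔ v ⬝ᵥ x = 0 := by
  simp only [mem_dotOrthogonal, mem_span_singleton, forall_exists_index, forall_apply_eq_imp_iff,
    smul_dotProduct, smul_eq_mul]
  exact ⟨fun h => by simpa using h 1, fun h a => by rw [h, mul_zero]⟩

theorem sub_smul_mem_dotOrthogonal_span_singleton {v z : ι → K} (hvz : v ⬝ᵥ z = 1)
    (x : ι → K) : x - (v ⬝ᵥ x) • z ∈ dotOrthogonal (K ∙ v) := by
  rw [mem_dotOrthogonal_span_singleton, dotProduct_sub, dotProduct_smul, hvz, smul_eq_mul,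
    mul_one, sub_self]

theorem finrank_add_finrank_dotOrthogonal (U : Submodule K (ι → K)) :
    finrank K U + finrank K (dotOrthogonal U) = Fintype.card ι := by
  rw [← Module.finrank_pi K (ι := ι), dotOrthogonal,
    ← Subspace.finrank_add_finrank_dualCoannihilator_eq
      (U.map (dotProductEquiv K ι).toLinearMap), LinearEquiv.finrank_map_eq]

theorem dotOrthogonal_dotOrthogonal (U : Submodule K (ι → K)) :
    dotOrthogonal (dotOrthogonal U) = U := by
  refine (eq_of_le_of_finrank_eq (fun u hu => mem_dotOrthogonal.2 fun x hx => ?_) ?_).symm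
  · rw [dotProduct_comm]
    exact mem_dotOrthogonal.1 hx u hu
  · have := finrank_add_finrank_dotOrthogonal U
    have := finrank_add_finrank_dotOrthogonal (dotOrthogonal U)
    omega

theorem isCoatom_dotOrthogonal_span_singleton {v : ι → K} (hv : v ≠ 0) :
    IsCoatom (dotOrthogonal (K ∙ v)) := by
  have hker : dotOrthogonal (K ∙ v) = LinearMap.ker (dotProductEquiv K ι v) := by
    ext x
    simp [mem_dotOrthogonal_span_singleton]
  rw [hker]
  exact LinearMap.isCoatom_ker_of_surjective <|
    LinearMap.surjective_of_ne_zero <| (LinearEquiv.map_ne_zero_iff _).2 hv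

end DotOrthogonal

namespace Matrix.IsSymm

variable {K ι : Type*} [Field K] [Fintype ι] {A : Matrix ι ι K}

theorem dotProduct_mulVec_comm (hA : A.IsSymm) (x y : ι → K) :
    x ⬝ᵥ A *ᵥ y = y ⬝ᵥ A *ᵥ x := by
  rw [dotProduct_mulVec, ← hA.eq, vecMul_transpose, dotProduct_comm, hA.eq]

theorem dotProduct_mulVec_eq_zero_of_forall_self (hA : A.IsSymm) (h2 : (2 : K) ≠ 0)
    {Y : Submodule K (ι → K)} (hY : ∀ y ∈ Y, y ⬝ᵥ A *ᵥ y = 0) :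
    ∀ y ∈ Y, ∀ y' ∈ Y, y ⬝ᵥ A *ᵥ y' = 0 := by
  intro y hy y' hy'
  have h := hY _ (add_mem hy hy')
  rw [mulVec_add, dotProduct_add, add_dotProduct, add_dotProduct, hY y hy, hY y' hy',
    hA.dotProduct_mulVec_comm y' y] at h
  have h' : (2 : K) * (y ⬝ᵥ A *ᵥ y') = 0 := by linear_combination h
  exact (mul_eq_zero.1 h').resolve_left h2

variable [DecidableEq ι]

theorem range_mulVecLin (hA : A.IsSymm) :
    LinearMap.range A.mulVecLin = dotOrthogonal (LinearMap.ker A.mulVecLin) := by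
  refine eq_of_le_of_finrank_eq ?_ ?_
  · rintro _ ⟨x, rfl⟩
    refine mem_dotOrthogonal.2 fun k (hk : A *ᵥ k = 0) => ?_
    rw [mulVecLin_apply, hA.dotProduct_mulVec_comm, hk, dotProduct_zero]
  · have := A.mulVecLin.finrank_range_add_finrank_ker
    have := finrank_add_finrank_dotOrthogonal (LinearMap.ker A.mulVecLin)
    rw [Module.finrank_pi] at *
    omega

theorem exists_mulVec_eq_zero_dotProduct_eq_one (hA : A.IsSymm) {v : ι → K}
    (hv : v ∉ LinearMap.range A.mulVecLin) : ∃ w, A *ᵥ w = 0 ∧ v ⬝ᵥ w = 1 := by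
  simp only [hA.range_mulVecLin, mem_dotOrthogonal, not_forall, exists_prop] at hv
  obtain ⟨k, hk : A *ᵥ k = 0, hkv⟩ := hv
  refine ⟨(k ⬝ᵥ v)⁻¹ • k, ?_, ?_⟩
  · rw [mulVec_smul, hk, smul_zero]
  · rw [dotProduct_smul, smul_eq_mul, dotProduct_comm v, inv_mul_cancel₀ hkv]

theorem two_mul_finrank_map_le_rank (hA : A.IsSymm) {Y : Submodule K (ι → K)}
    (hY : ∀ y ∈ Y, ∀ y' ∈ Y, y ⬝ᵥ A *ᵥ y' = 0) :
    2 * finrank K (Y.map A.mulVecLin) ≤ A.rank := by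
  have hle : Y.map A.mulVecLin ≤ dotOrthogonal (Y ⊔ LinearMap.ker A.mulVecLin) := by
    rintro _ ⟨y, hy, rfl⟩
    refine mem_dotOrthogonal.2 fun x hx => ?_
    obtain ⟨y', hy', k, hk : A *ᵥ k = 0, rfl⟩ := mem_sup.1 hx
    rw [mulVecLin_apply, add_dotProduct, hY y' hy' y hy, hA.dotProduct_mulVec_comm, hk,
      dotProduct_zero, add_zero]
  have h₁ := finrank_mono hle
  have h₂ := finrank_add_finrank_dotOrthogonal (Y ⊔ LinearMap.ker A.mulVecLin)
  have h₃ := finrank_sup_add_finrank_inf_eq Y (LinearMap.ker A.mulVecLin)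
  have h₄ := A.mulVecLin.finrank_map_add_finrank_inf_ker Y
  have h₅ := A.mulVecLin.finrank_range_add_finrank_ker
  rw [Module.finrank_pi] at h₅
  rw [Matrix.rank]
  omega

end Matrix.IsSymm

section MaxRank

variable {K : Type*} [Field K] {n : ℕ} {D : Submodule K (Matrix (Fin n) (Fin n) K)}
  {M N : Matrix (Fin n) (Fin n) K} {v z : Fin n → K}

theorem mulVec_mem_of_mem_matHyp {U : Submodule K (Fin n → K)}
    (hN : N ∈ matHyp D (dotOrthogonal U)) {h : Fin n → K} (hh : h ∈ dotOrthogonal U) :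
    N *ᵥ h ∈ U :=
  dotOrthogonal_dotOrthogonal U ▸ mem_dotOrthogonal.2 fun x hx => hN.2 x hx h hh

theorem eq_zero_of_mem_matHyp_of_mulVec_eq_zero (hD : ∀ N ∈ D, N.IsSymm) (hvz : v ⬝ᵥ z = 1)
    (hN : N ∈ matHyp D (dotOrthogonal (K ∙ v))) (hNz : N *ᵥ z = 0) : N = 0 := by
  refine ext_of_mulVec_single fun i => ?_
  set h := Pi.single i 1 - (v ⬝ᵥ Pi.single i 1) • z
  obtain ⟨c, hc⟩ := mem_span_singleton.1 <|
    mulVec_mem_of_mem_matHyp hN (sub_smul_mem_dotOrthogonal_span_singleton hvz _)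
  have hc0 : c = 0 := by
    have := (hD N hN.1).dotProduct_mulVec_comm z h
    rwa [← hc, hNz, dotProduct_zero, dotProduct_smul, dotProduct_comm, hvz, smul_eq_mul,
      mul_one] at this
  have : N *ᵥ h = 0 := by rw [← hc, hc0, zero_smul]
  rwa [mulVec_sub, mulVec_smul, hNz, smul_zero, sub_zero, ← zero_mulVec (Pi.single i 1)] at this

theorem notMem_range_add_of_mem_matHyp (hM : M.IsSymm)
    (hmax : ∀ N ∈ D, (M + N).rank ≤ M.rank) (hMz : M *ᵥ z = 0) (hvz : v ⬝ᵥ z = 1)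
    (hN : N ∈ matHyp D (dotOrthogonal (K ∙ v))) :
    v ∉ LinearMap.range (M + N).mulVecLin := by
  refine notMem_of_le_sup_span_singleton ?_ ?_ (hmax N hN.1)
  · rintro ⟨x, rfl⟩
    rw [mulVecLin_apply, dotProduct_comm, hM.dotProduct_mulVec_comm, hMz,
      dotProduct_zero] at hvz
    exact zero_ne_one hvz
  · rintro _ ⟨x, rfl⟩
    set h := x - (v ⬝ᵥ x) • z
    have hMh : M *ᵥ x = (M + N) *ᵥ h - N *ᵥ h := by
      rw [add_mulVec, add_sub_cancel_right, mulVec_sub, mulVec_smul, hMz, smul_zero, sub_zero]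
    rw [mulVecLin_apply, hMh]
    exact sub_mem_sup ⟨h, rfl⟩
      (mulVec_mem_of_mem_matHyp hN (sub_smul_mem_dotOrthogonal_span_singleton hvz x))

theorem dotProduct_mulVec_eq_of_mem_matHyp (hD : ∀ N ∈ D, N.IsSymm) (hM : M.IsSymm)
    (hmax : ∀ N ∈ D, (M + N).rank ≤ M.rank) (hMz : M *ᵥ z = 0) (hvz : v ⬝ᵥ z = 1)
    (hN : N ∈ matHyp D (dotOrthogonal (K ∙ v))) {u : Fin n → K}
    (hu : u ∈ dotOrthogonal (K ∙ v)) (huN : N *ᵥ z - M *ᵥ u ∈ K ∙ v) :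
    z ⬝ᵥ N *ᵥ z = u ⬝ᵥ M *ᵥ u := by
  have hP : (M + N).IsSymm := hM.add (hD N hN.1)
  have hPzu : (M + N) *ᵥ z = (M + N) *ᵥ u := by
    have hmem : (M + N) *ᵥ (z - u) ∈ K ∙ v := by
      have : (M + N) *ᵥ (z - u) = (N *ᵥ z - M *ᵥ u) - N *ᵥ u := by
        simp only [add_mulVec, mulVec_sub, hMz]
        abel
      rw [this]
      exact sub_mem huN (mulVec_mem_of_mem_matHyp hN hu)
    have hdisj : Disjoint (LinearMap.range (M + N).mulVecLin) (K ∙ v) :=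
      disjoint_span_singleton.2 fun h =>
        absurd h (notMem_range_add_of_mem_matHyp hM hmax hMz hvz hN)
    rw [← sub_eq_zero, ← mulVec_sub]
    exact disjoint_def.1 hdisj _ ⟨z - u, rfl⟩ hmem
  calc z ⬝ᵥ N *ᵥ z = z ⬝ᵥ (M + N) *ᵥ z := by rw [add_mulVec, hMz, zero_add]
    _ = u ⬝ᵥ (M + N) *ᵥ u := by rw [hPzu, hP.dotProduct_mulVec_comm, hPzu]
    _ = u ⬝ᵥ M *ᵥ u := by rw [add_mulVec, dotProduct_add, hN.2 u hu u hu, add_zero]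

theorem dotProduct_mulVec_self_eq_zero_of_mem_matHyp (hchar : ringChar K ≠ 2)
    (hD : ∀ N ∈ D, N.IsSymm) (hM : M.IsSymm) (hmax : ∀ N ∈ D, (M + N).rank ≤ M.rank)
    (hMz : M *ᵥ z = 0) (hvz : v ⬝ᵥ z = 1) (hN : N ∈ matHyp D (dotOrthogonal (K ∙ v)))
    {y : Fin n → K} (hy : y ∈ dotOrthogonal (K ∙ v)) (hyN : N *ᵥ z - M *ᵥ y ∈ K ∙ v) :
    y ⬝ᵥ M *ᵥ y = 0 := by
  have h₁ := dotProduct_mulVec_eq_of_mem_matHyp hD hM hmax hMz hvz hN hy hyN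
  have hneg : (-N) *ᵥ z - M *ᵥ (-y) = -(N *ᵥ z - M *ᵥ y) := by
    rw [neg_mulVec, mulVec_neg]
    abel
  have h₂ := dotProduct_mulVec_eq_of_mem_matHyp hD hM hmax hMz hvz (neg_mem hN) (neg_mem hy)
    (hneg ▸ neg_mem hyN)
  simp only [neg_mulVec, mulVec_neg, dotProduct_neg, neg_dotProduct, neg_neg] at h₂
  have h : (2 : K) * (y ⬝ᵥ M *ᵥ y) = 0 := by linear_combination -(h₁ + h₂)
  exact (mul_eq_zero.1 h).resolve_left (Ring.two_ne_zero hchar)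

theorem exists_sub_mulVec_mem_span_of_mem_matHyp (hD : ∀ N ∈ D, N.IsSymm) (hM : M.IsSymm)
    (hmax : ∀ N ∈ D, (M + N).rank ≤ M.rank) (hMz : M *ᵥ z = 0) (hvz : v ⬝ᵥ z = 1)
    (hN : N ∈ matHyp D (dotOrthogonal (K ∙ v))) :
    ∃ y ∈ dotOrthogonal (K ∙ v), N *ᵥ z - M *ᵥ y ∈ K ∙ v := by
  obtain ⟨w, hw, hvw⟩ := (hM.add (hD N hN.1)).exists_mulVec_eq_zero_dotProduct_eq_one
    (notMem_range_add_of_mem_matHyp hM hmax hMz hvz hN)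
  have hy : z - w ∈ dotOrthogonal (K ∙ v) := by
    rw [mem_dotOrthogonal_span_singleton, dotProduct_sub, hvz, hvw, sub_self]
  refine ⟨z - w, hy, ?_⟩
  have : N *ᵥ z - M *ᵥ (z - w) = N *ᵥ (z - w) := by
    rw [add_mulVec] at hw
    rw [mulVec_sub, mulVec_sub, hMz, eq_neg_of_add_eq_zero_left hw]
    abel
  rw [this]
  exact mulVec_mem_of_mem_matHyp hN hy

theorem mulVec_eq_zero_of_mem_matHyp_of_mem_span (hD : ∀ N ∈ D, N.IsSymm) (hM : M.IsSymm)
    (hmax : ∀ N ∈ D, (M + N).rank ≤ M.rank) (hMz : M *ᵥ z = 0) (hvz : v ⬝ᵥ z = 1)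
    (hN : N ∈ matHyp D (dotOrthogonal (K ∙ v))) (hNz : N *ᵥ z ∈ K ∙ v) :
    N *ᵥ z = 0 := by
  obtain ⟨a, ha⟩ := mem_span_singleton.1 hNz
  have h := dotProduct_mulVec_eq_of_mem_matHyp hD hM hmax hMz hvz hN (zero_mem _)
    (by rwa [mulVec_zero, sub_zero])
  rw [← ha, mulVec_zero, dotProduct_zero, dotProduct_smul, dotProduct_comm, hvz, smul_eq_mul,
    mul_one] at h
  rw [← ha, h, zero_smul]

theorem two_mul_finrank_matHyp_le_rank (hchar : ringChar K ≠ 2) (hD : ∀ N ∈ D, N.IsSymm)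
    (hM : M.IsSymm) (hmax : ∀ N ∈ D, (M + N).rank ≤ M.rank) (hMz : M *ᵥ z = 0)
    (hvz : v ⬝ᵥ z = 1) :
    2 * finrank K (matHyp D (dotOrthogonal (K ∙ v))) ≤ M.rank := by
  set S := matHyp D (dotOrthogonal (K ∙ v))
  set W := LinearMap.range (((mulVecBilin K K).flip z).domRestrict S)
  set Y := dotOrthogonal (K ∙ v) ⊓ (W ⊔ K ∙ v).comap M.mulVecLin
  have hSW : finrank K S = finrank K W := by
    refine (LinearMap.finrank_range_of_inj fun N N' hNN' => Subtype.ext ?_).symm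
    rw [← sub_eq_zero]
    exact eq_zero_of_mem_matHyp_of_mulVec_eq_zero hD hvz (sub_mem N.2 N'.2)
      (by rw [sub_mulVec]; exact sub_eq_zero.2 hNN')
  have hWv : Disjoint W (K ∙ v) := by
    refine disjoint_def.2 ?_
    rintro _ ⟨N, rfl⟩ hNv
    exact mulVec_eq_zero_of_mem_matHyp_of_mem_span hD hM hmax hMz hvz N.2 hNv
  have hWY : W ≤ Y.map M.mulVecLin ⊔ K ∙ v := by
    rintro _ ⟨N, rfl⟩
    obtain ⟨y, hy, hyN⟩ := exists_sub_mulVec_mem_span_of_mem_matHyp hD hM hmax hMz hvz N.2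
    have hyY : y ∈ Y := ⟨hy, show M *ᵥ y ∈ W ⊔ K ∙ v from
      sub_sub_cancel (N.1 *ᵥ z) (M *ᵥ y) ▸ sub_mem_sup ⟨N, rfl⟩ hyN⟩
    exact mem_sup.2 ⟨M *ᵥ y, ⟨y, hyY, rfl⟩, _, hyN, add_sub_cancel _ _⟩
  have hY : ∀ y ∈ Y, ∀ y' ∈ Y, y ⬝ᵥ M *ᵥ y' = 0 := by
    refine hM.dotProduct_mulVec_eq_zero_of_forall_self (Ring.two_ne_zero hchar) ?_
    rintro y ⟨hy, hMy⟩
    obtain ⟨_, ⟨N, rfl⟩, c, hc, hsum⟩ := mem_sup.1 hMy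
    refine dotProduct_mulVec_self_eq_zero_of_mem_matHyp hchar hD hM hmax hMz hvz N.2 hy ?_
    rw [show M *ᵥ y = N.1 *ᵥ z + c from hsum.symm, sub_add_cancel_left]
    exact neg_mem hc
  calc 2 * finrank K S = 2 * finrank K W := by rw [hSW]
    _ ≤ 2 * finrank K (Y.map M.mulVecLin) :=
      Nat.mul_le_mul_left 2 (finrank_le_of_le_sup_of_disjoint hWv hWY)
    _ ≤ M.rank := hM.two_mul_finrank_map_le_rank hY

end MaxRank

theorem Matrix.exists_forall_rank_le {R : Type*} [CommSemiring R] [StrongRankCondition R]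
    {m n : ℕ} {S : Set (Matrix (Fin m) (Fin n) R)} (hS : S.Nonempty) :
    ∃ M ∈ S, ∀ P ∈ S, P.rank ≤ M.rank := by
  obtain ⟨_, ⟨M, hM, rfl⟩, hmax⟩ := BddAbove.exists_isGreatest_of_nonempty
    (S := Matrix.rank '' S) ⟨n, by rintro _ ⟨P, -, rfl⟩; exact P.rank_le_width⟩ (hS.image _)
  exact ⟨M, hM, fun P hP => hmax ⟨P, hP, rfl⟩⟩

/-- Over a field of characteristic not 2: if `𝒮` is a nonempty affine subspace of
symmetric `n × n` matrices whose direction `S` satisfies `dim S_H ≥ s` for every linear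
hyperplane `H` of `Kⁿ`, then `𝒮` contains a matrix of rank at least `2s`. -/
theorem stmt8 {K : Type*} [Field K] (hchar : ringChar K ≠ 2) (n s : ℕ) (hs : 2 * s ≤ n)
    (𝒮 : AffineSubspace K (Matrix (Fin n) (Fin n) K)) (hne : (𝒮 : Set (Matrix (Fin n) (Fin n) K)).Nonempty)
    (hsymm : ∀ M ∈ 𝒮, M.IsSymm)
    (hdim : ∀ H : Submodule K (Fin n → K), IsCoatom H →
      s ≤ Module.finrank K (matHyp 𝒮.direction H)) :
    ∃ M ∈ 𝒮, 2 * s ≤ M.rank := by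
  obtain ⟨M, hM, hmax⟩ := exists_forall_rank_le hne
  refine ⟨M, hM, ?_⟩
  by_cases hfull : M.rank = n
  · exact hfull.symm ▸ hs
  obtain ⟨v, hv⟩ : ∃ v, v ∉ LinearMap.range M.mulVecLin := by
    by_contra! h
    exact hfull (by rw [Matrix.rank, eq_top_iff'.2 h, finrank_top, finrank_fin_fun])
  obtain ⟨z, hMz, hvz⟩ := (hsymm M hM).exists_mulVec_eq_zero_dotProduct_eq_one hv
  have hD : ∀ N ∈ 𝒮.direction, N.IsSymm := by
    intro N hN
    obtain ⟨P, hP, rfl⟩ := (AffineSubspace.mem_direction_iff_eq_vsub_right hM N).1 hN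
    exact (hsymm P hP).sub (hsymm M hM)
  have hmaxD : ∀ N ∈ 𝒮.direction, (M + N).rank ≤ M.rank := fun N hN =>
    hmax _ (add_comm N M ▸ AffineSubspace.vadd_mem_of_mem_direction hN hM)
  have hv0 : v ≠ 0 := by
    rintro rfl
    exact zero_ne_one (zero_dotProduct z ▸ hvz)
  calc 2 * s ≤ 2 * finrank K (matHyp 𝒮.direction (dotOrthogonal (K ∙ v))) :=
        Nat.mul_le_mul_left 2 (hdim _ (isCoatom_dotOrthogonal_span_singleton hv0))
    _ ≤ M.rank := two_mul_finrank_matHyp_le_rank hchar hD (hsymm M hM) hmaxD hMz hvz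
end

section
/- Let K be an arbitrary field, and let n and s be non-negative integers with 2s ≤ n. Let 𝒮 be a non-empty affine subspace of the space of n×n alternating matrices over K, and let S denote its translation vector space. Assume that for every linear hyperplane H of Kⁿ, the subspace S_H = {N ∈ S : XᵀNY = 0 for all X, Y ∈ H} has dimension at least s. Then 𝒮 contains a matrix of rank at least 2s. -/
/-!
Take `M ∈ 𝒮` of maximal rank `r` and suppose `r < 2s`. Alternating matrices have even rank, so
there are `c, c'` linearly independent modulo `R = range M`. For `c ≠ 0`, the matrices of `S`
vanishing on the hyperplane `cᗮ` are exactly the `c ∧ w` with `w ∈ V_c := {w | c ∧ w ∈ S}`, and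
`c ∈ V_c` is killed by `w ↦ c ∧ w`, so `dim V_c ≥ s + 1`. If some `w ∈ V_c` lies outside
`R + K c`, then `M + c ∧ w ∈ 𝒮` has larger rank; hence `W_c := V_c ∩ R` has dimension at least
`s`, and likewise `W_{c'}`. If `aᵀ M a' ≠ 0` for some `M a ∈ W_c`, `M a' ∈ W_{c'}`, then
`M + c ∧ M a + c' ∧ M a' ∈ 𝒮` again has larger rank. So `W_{c'}` lies in the orthogonal of
`M⁻¹(W_c)`, giving `dim W_c + dim W_{c'} ≤ r`, that is `2s ≤ r`.
-/

open Matrix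

open Module

section

variable {K V W : Type*} [Field K] [AddCommGroup V] [Module K V] [AddCommGroup W] [Module K W]

lemma LinearMap.finrank_comap_eq_of_le_range [FiniteDimensional K V] (f : V →ₗ[K] W)
    {p : Submodule K W} (hp : p ≤ LinearMap.range f) :
    finrank K (p.comap f) = finrank K p + finrank K (LinearMap.ker f) := by
  have hker : LinearMap.ker f ≤ p.comap f := fun x hx => by simp [LinearMap.mem_ker.mp hx]
  have := (f.domRestrict (p.comap f)).finrank_range_add_finrank_ker
  rwa [LinearMap.range_domRestrict, Submodule.map_comap_eq_of_le hp, LinearMap.ker_domRestrict,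
    (Submodule.comapSubtypeEquivOfLe hker).finrank_eq, eq_comm] at this

lemma Submodule.finrank_map_lt_of_mem_ker_s9 [FiniteDimensional K V] {f : V →ₗ[K] W}
    {p : Submodule K V} {x : V} (hxp : x ∈ p) (hx : x ≠ 0) (hfx : f x = 0) :
    finrank K (p.map f) < finrank K p := by
  have := (f.domRestrict p).finrank_range_add_finrank_ker
  have : 0 < finrank K (LinearMap.ker (f.domRestrict p)) :=
    Module.finrank_pos_iff_exists_ne_zero.mpr ⟨⟨⟨x, hxp⟩, by simpa using hfx⟩, by simpa using hx⟩
  rw [LinearMap.range_domRestrict] at *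
  omega

lemma Submodule.exists_notMem_of_finrank_lt (p : Submodule K V) (h : finrank K p < finrank K V) :
    ∃ v, v ∉ p :=
  SetLike.exists_not_mem_of_ne_top p fun hp => by rw [hp, finrank_top] at h; exact h.false

lemma Submodule.eq_zero_of_smul_add_smul_mem {p : Submodule K V} {u v : V} (hu : u ∉ p)
    (hv : v ∉ p ⊔ K ∙ u) {a b : K} (h : a • u + b • v ∈ p) : a = 0 ∧ b = 0 := by
  have hb : b = 0 := by
    by_contra hb
    refine hv ?_
    have hv' : v = b⁻¹ • (a • u + b • v) + (-(b⁻¹ * a)) • u := by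
      rw [smul_add, smul_smul, smul_smul, inv_mul_cancel₀ hb, one_smul, neg_smul]
      abel
    rw [hv']
    exact Submodule.add_mem_sup (p.smul_mem _ h) (Submodule.mem_span_singleton.mpr ⟨_, rfl⟩)
  subst hb
  rw [zero_smul, add_zero] at h
  exact ⟨by_contra fun ha => hu ((p.smul_mem_iff ha).mp h), rfl⟩

end

section

variable {K ι : Type*} [Field K] [Fintype ι]

namespace Submodule

def dotOrthogonal (A : Submodule K (ι → K)) : Submodule K (ι → K) :=
  LinearMap.BilinForm.orthogonal (dotProductBilin K K) A

lemma mem_dotOrthogonal {A : Submodule K (ι → K)} {v : ι → K} :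
    v ∈ A.dotOrthogonal ↔ ∀ a ∈ A, a ⬝ᵥ v = 0 :=
  LinearMap.BilinForm.mem_orthogonal_iff

lemma finrank_dotOrthogonal_add (A : Submodule K (ι → K)) :
    finrank K A.dotOrthogonal + finrank K A = Fintype.card ι := by
  classical
  have hB : (dotProductBilin K K : LinearMap.BilinForm K (ι → K)).Nondegenerate := by
    refine ⟨fun x hx => ?_, fun y hy => ?_⟩ <;> ext i
    · simpa [dotProduct_single] using hx (Pi.single i 1)
    · simpa [single_dotProduct] using hy (Pi.single i 1)
  have := A.finrank_le
  rw [dotOrthogonal, LinearMap.BilinForm.finrank_orthogonal hB,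
    Module.finrank_fintype_fun_eq_card] at *
  omega

end Submodule

lemma exists_dotProduct_eq_one {c : ι → K} (hc : c ≠ 0) : ∃ e, c ⬝ᵥ e = 1 := by
  classical
  obtain ⟨i, hi⟩ : ∃ i, c i ≠ 0 := Function.ne_iff.mp hc
  exact ⟨(c i)⁻¹ • Pi.single i 1, by simp [dotProduct_single, hi]⟩

lemma isCoatom_ker_dotProductBilin {c : ι → K} (hc : c ≠ 0) :
    IsCoatom (LinearMap.ker (dotProductBilin K K c)) := by
  obtain ⟨e, he⟩ := exists_dotProduct_eq_one hc
  exact LinearMap.isCoatom_ker_of_surjective fun t => ⟨t • e, by simp [he]⟩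

end

namespace Matrix

section CommRing

variable {K ι : Type*} [CommRing K]

def wedge (c : ι → K) : (ι → K) →ₗ[K] Matrix ι ι K :=
  vecMulVecBilin K K c - (vecMulVecBilin K K).flip c

lemma wedge_apply (c w : ι → K) : wedge c w = vecMulVec c w - vecMulVec w c := rfl

@[simp] lemma wedge_self (c : ι → K) : wedge c c = 0 := by
  rw [wedge_apply, sub_self]

variable [Fintype ι]

def IsAlt (M : Matrix ι ι K) : Prop := ∀ x, x ⬝ᵥ M *ᵥ x = 0

lemma IsAlt.dotProduct_mulVec_eq_neg {M : Matrix ι ι K} (hM : M.IsAlt) (x y : ι → K) :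
    x ⬝ᵥ M *ᵥ y = -(y ⬝ᵥ M *ᵥ x) := by
  have h := hM (x + y)
  simp only [mulVec_add, dotProduct_add, add_dotProduct, hM x, hM y] at h
  linear_combination h

lemma IsAlt.mulVec_dotProduct {M : Matrix ι ι K} (hM : M.IsAlt) (x y : ι → K) :
    M *ᵥ x ⬝ᵥ y = -(x ⬝ᵥ M *ᵥ y) := by
  rw [dotProduct_comm, hM.dotProduct_mulVec_eq_neg]

lemma IsAlt.sub {M N : Matrix ι ι K} (hM : M.IsAlt) (hN : N.IsAlt) : (M - N).IsAlt := fun x => by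
  rw [sub_mulVec, dotProduct_sub, hM x, hN x, sub_zero]

lemma wedge_mulVec (c w x : ι → K) : wedge c w *ᵥ x = (w ⬝ᵥ x) • c - (c ⬝ᵥ x) • w := by
  simp [wedge_apply, sub_mulVec, vecMulVec_mulVec]

lemma dotProduct_wedge_mulVec (c w x y : ι → K) :
    x ⬝ᵥ wedge c w *ᵥ y = (c ⬝ᵥ x) * (w ⬝ᵥ y) - (w ⬝ᵥ x) * (c ⬝ᵥ y) := by
  rw [wedge_mulVec, dotProduct_sub, dotProduct_smul, dotProduct_smul, dotProduct_comm x c,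
    dotProduct_comm x w, smul_eq_mul, smul_eq_mul]
  ring

lemma isAlt_wedge (c w : ι → K) : (wedge c w).IsAlt := fun x => by
  rw [dotProduct_wedge_mulVec]
  ring

lemma ext_of_dotProduct_mulVec {A B : Matrix ι ι K} (h : ∀ x y, x ⬝ᵥ A *ᵥ y = x ⬝ᵥ B *ᵥ y) :
    A = B := by
  classical
  ext i j
  simpa [mulVec_single, single_dotProduct] using h (Pi.single i 1) (Pi.single j 1)

lemma IsAlt.eq_wedge {N : Matrix ι ι K} (hN : N.IsAlt) {c e : ι → K} (he : c ⬝ᵥ e = 1)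
    (h : ∀ x y, c ⬝ᵥ x = 0 → c ⬝ᵥ y = 0 → x ⬝ᵥ N *ᵥ y = 0) : N = wedge c (-(N *ᵥ e)) := by
  have hsplit (x : ι → K) : ∃ x₀ t, c ⬝ᵥ x₀ = 0 ∧ x = x₀ + t • e :=
    ⟨x - (c ⬝ᵥ x) • e, c ⬝ᵥ x, by simp [dotProduct_sub, dotProduct_smul, he], by abel⟩
  refine ext_of_dotProduct_mulVec fun x y => ?_
  obtain ⟨x₀, s, hx₀, rfl⟩ := hsplit x
  obtain ⟨y₀, t, hy₀, rfl⟩ := hsplit y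
  simp only [dotProduct_wedge_mulVec, neg_dotProduct, mulVec_add, mulVec_smul, dotProduct_add,
    add_dotProduct, dotProduct_smul, smul_dotProduct, smul_eq_mul, hx₀, hy₀, he]
  rw [dotProduct_comm (N *ᵥ e), dotProduct_comm (N *ᵥ e), hN.dotProduct_mulVec_eq_neg y₀ e]
  linear_combination h x₀ y₀ hx₀ hy₀ + s * t * hN e

end CommRing

variable {K ι : Type*} [Field K] [Fintype ι]

lemma IsAlt.range_mulVecLin_eq_dotOrthogonal_ker {M : Matrix ι ι K} (hM : M.IsAlt) :
    LinearMap.range M.mulVecLin = (LinearMap.ker M.mulVecLin).dotOrthogonal := by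
  refine Submodule.eq_of_le_of_finrank_eq ?_ ?_
  · rintro _ ⟨x, rfl⟩
    refine Submodule.mem_dotOrthogonal.mpr fun k hk => ?_
    rw [LinearMap.mem_ker, mulVecLin_apply] at hk
    simp [dotProduct_comm k, hM.mulVec_dotProduct, hk]
  · have := M.mulVecLin.finrank_range_add_finrank_ker
    have := (LinearMap.ker M.mulVecLin).finrank_dotOrthogonal_add
    rw [Module.finrank_fintype_fun_eq_card] at *
    omega

lemma rank_lt_rank_of_ker_lt {M N : Matrix ι ι K}
    (h : LinearMap.ker N.mulVecLin < LinearMap.ker M.mulVecLin) : M.rank < N.rank := by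
  have := M.mulVecLin.finrank_range_add_finrank_ker
  have := N.mulVecLin.finrank_range_add_finrank_ker
  have := Submodule.finrank_lt_finrank_of_lt h
  rw [rank, rank]
  omega

lemma IsAlt.rank_lt_rank_of_forall_mulVec_eq_zero {M N : Matrix ι ι K} (hM : M.IsAlt)
    {c : ι → K} (hc : c ∉ LinearMap.range M.mulVecLin)
    (h : ∀ x, N *ᵥ x = 0 → M *ᵥ x = 0 ∧ c ⬝ᵥ x = 0) : M.rank < N.rank := by
  rw [hM.range_mulVecLin_eq_dotOrthogonal_ker, Submodule.mem_dotOrthogonal] at hc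
  push Not at hc
  obtain ⟨k, hk, hkc⟩ := hc
  refine rank_lt_rank_of_ker_lt (SetLike.lt_iff_le_and_exists.mpr
    ⟨fun x hx => (h x hx).1, k, hk, fun hk' => hkc ?_⟩)
  rw [dotProduct_comm, (h k hk').2]

lemma IsAlt.rank_lt_rank_add_wedge {M : Matrix ι ι K} (hM : M.IsAlt) {c w : ι → K}
    (hc : c ∉ LinearMap.range M.mulVecLin) (hw : w ∉ LinearMap.range M.mulVecLin ⊔ K ∙ c) :
    M.rank < (M + wedge c w).rank := by
  refine hM.rank_lt_rank_of_forall_mulVec_eq_zero hc fun x hx => ?_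
  rw [add_mulVec, wedge_mulVec] at hx
  have hmem : (w ⬝ᵥ x) • c + (-(c ⬝ᵥ x)) • w ∈ LinearMap.range M.mulVecLin :=
    ⟨-x, by rw [mulVecLin_apply, mulVec_neg]; linear_combination (norm := module) -hx⟩
  obtain ⟨hwx, hcx⟩ := Submodule.eq_zero_of_smul_add_smul_mem hc hw hmem
  rw [neg_eq_zero] at hcx
  rw [hwx, hcx, zero_smul, zero_smul, sub_zero, add_zero] at hx
  exact ⟨hx, hcx⟩

lemma IsAlt.rank_lt_rank_add_wedge_add_wedge {M : Matrix ι ι K} (hM : M.IsAlt) {c c' : ι → K}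
    (hc : c ∉ LinearMap.range M.mulVecLin) (hc' : c' ∉ LinearMap.range M.mulVecLin ⊔ K ∙ c)
    {a a' : ι → K} (haa' : a ⬝ᵥ M *ᵥ a' ≠ 0) :
    M.rank < (M + wedge c (M *ᵥ a) + wedge c' (M *ᵥ a')).rank := by
  refine hM.rank_lt_rank_of_forall_mulVec_eq_zero hc fun x hx => ?_
  rw [add_mulVec, add_mulVec, wedge_mulVec, wedge_mulVec] at hx
  have hmem : (M *ᵥ a ⬝ᵥ x) • c + (M *ᵥ a' ⬝ᵥ x) • c' ∈ LinearMap.range M.mulVecLin :=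
    ⟨(c ⬝ᵥ x) • a + (c' ⬝ᵥ x) • a' - x, by
      rw [mulVecLin_apply, mulVec_sub, mulVec_add, mulVec_smul, mulVec_smul]
      linear_combination (norm := module) -hx⟩
  obtain ⟨hax, ha'x⟩ := Submodule.eq_zero_of_smul_add_smul_mem hc hc' hmem
  have hMx : M *ᵥ x = (c ⬝ᵥ x) • M *ᵥ a + (c' ⬝ᵥ x) • M *ᵥ a' := by
    rw [hax, ha'x] at hx
    linear_combination (norm := module) hx
  have hpair (y : ι → K) :
      y ⬝ᵥ M *ᵥ x = (c ⬝ᵥ x) * (y ⬝ᵥ M *ᵥ a) + (c' ⬝ᵥ x) * (y ⬝ᵥ M *ᵥ a') := by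
    rw [hMx, dotProduct_add, dotProduct_smul, dotProduct_smul, smul_eq_mul, smul_eq_mul]
  -- Pairing `M x` with `a` and `a'` isolates `c' ⬝ᵥ x` and `c ⬝ᵥ x`.
  have ha : a ⬝ᵥ M *ᵥ x = 0 := by rw [← neg_eq_zero, ← hM.mulVec_dotProduct, hax]
  have ha' : a' ⬝ᵥ M *ᵥ x = 0 := by rw [← neg_eq_zero, ← hM.mulVec_dotProduct, ha'x]
  rw [hpair, hM a, mul_zero, zero_add] at ha
  rw [hpair, hM a', hM.dotProduct_mulVec_eq_neg a' a, mul_zero, add_zero, mul_neg,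
    neg_eq_zero] at ha'
  have hcx := (mul_eq_zero.mp ha').resolve_right haa'
  rw [hcx, (mul_eq_zero.mp ha).resolve_right haa', zero_smul, zero_smul, add_zero] at hMx
  exact ⟨hMx, hcx⟩

lemma IsAlt.rank_sub_wedge_add_two {M : Matrix ι ι K} (hM : M.IsAlt) {u v : ι → K}
    (huv : u ⬝ᵥ M *ᵥ v = 1) : (M - wedge (M *ᵥ u) (M *ᵥ v)).rank + 2 = M.rank := by
  set N := M - wedge (M *ᵥ u) (M *ᵥ v)
  have hN (x : ι → K) : N *ᵥ x = M *ᵥ (x + (v ⬝ᵥ M *ᵥ x) • u - (u ⬝ᵥ M *ᵥ x) • v) := by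
    rw [sub_mulVec, wedge_mulVec, hM.mulVec_dotProduct, hM.mulVec_dotProduct, mulVec_sub,
      mulVec_add, mulVec_smul, mulVec_smul]
    module
  have hvu : v ⬝ᵥ M *ᵥ u = -1 := by rw [hM.dotProduct_mulVec_eq_neg, huv]
  have hker : LinearMap.ker N.mulVecLin = LinearMap.ker M.mulVecLin ⊔ K ∙ u ⊔ K ∙ v := by
    apply le_antisymm
    · intro x hx
      rw [LinearMap.mem_ker, mulVecLin_apply, hN] at hx
      have hx' : x = (x + (v ⬝ᵥ M *ᵥ x) • u - (u ⬝ᵥ M *ᵥ x) • v) + (-(v ⬝ᵥ M *ᵥ x)) • u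
          + (u ⬝ᵥ M *ᵥ x) • v := by module
      rw [hx']
      exact Submodule.add_mem_sup
        (Submodule.add_mem_sup hx (Submodule.mem_span_singleton.mpr ⟨_, rfl⟩))
        (Submodule.mem_span_singleton.mpr ⟨_, rfl⟩)
    · simp only [sup_le_iff, Submodule.span_singleton_le_iff_mem, LinearMap.mem_ker,
        mulVecLin_apply]
      refine ⟨⟨fun x hx => ?_, ?_⟩, ?_⟩
      · rw [LinearMap.mem_ker, mulVecLin_apply] at hx
        simp [hN, hx]
      · simp [hN, hvu, hM u]
      · simp [hN, huv, hM v]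
  have hu : u ∉ LinearMap.ker M.mulVecLin := fun h => by
    rw [LinearMap.mem_ker, mulVecLin_apply] at h
    simp [h] at hvu
  have hv : v ∉ LinearMap.ker M.mulVecLin ⊔ K ∙ u := fun h => by
    obtain ⟨k, hk, y, hy, rfl⟩ := Submodule.mem_sup.mp h
    obtain ⟨t, rfl⟩ := Submodule.mem_span_singleton.mp hy
    rw [LinearMap.mem_ker, mulVecLin_apply] at hk
    simp [mulVec_add, mulVec_smul, hk, hM u] at huv
  have := M.mulVecLin.finrank_range_add_finrank_ker
  have := N.mulVecLin.finrank_range_add_finrank_ker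
  rw [hker, Submodule.finrank_sup_span_singleton hv,
    Submodule.finrank_sup_span_singleton hu] at this
  rw [rank, rank]
  omega

lemma exists_dotProduct_mulVec_eq_one {M : Matrix ι ι K} (hM : M ≠ 0) :
    ∃ u v, u ⬝ᵥ M *ᵥ v = 1 := by
  classical
  obtain ⟨i, j, hij⟩ : ∃ i j, M i j ≠ 0 := by
    by_contra! h
    exact hM (Matrix.ext h)
  exact ⟨(M i j)⁻¹ • Pi.single i 1, Pi.single j 1, by simp [mulVec_single, hij]⟩

theorem IsAlt.even_rank {M : Matrix ι ι K} (hM : M.IsAlt) : Even M.rank := by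
  induction hr : M.rank using Nat.strong_induction_on generalizing M with
  | _ r ih =>
    obtain rfl | hM0 := eq_or_ne M 0
    · simp [← hr]
    obtain ⟨u, v, huv⟩ := exists_dotProduct_mulVec_eq_one hM0
    have h2 := hM.rank_sub_wedge_add_two huv
    obtain ⟨k, hk⟩ := ih _ (by omega) (hM.sub (isAlt_wedge (M *ᵥ u) (M *ᵥ v))) rfl
    exact ⟨k + 1, by omega⟩

lemma finrank_add_finrank_le_rank (M : Matrix ι ι K) {W W' : Submodule K (ι → K)}
    (hW : W ≤ LinearMap.range M.mulVecLin) (hW' : W' ≤ LinearMap.range M.mulVecLin)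
    (h : ∀ a a', M *ᵥ a ∈ W → M *ᵥ a' ∈ W' → a ⬝ᵥ M *ᵥ a' = 0) :
    finrank K W + finrank K W' ≤ M.rank := by
  set A := W.comap M.mulVecLin
  have hW'A : W' ≤ A.dotOrthogonal := by
    intro w' hw'
    obtain ⟨a', rfl⟩ := hW' hw'
    exact Submodule.mem_dotOrthogonal.mpr fun a ha => h a a' ha hw'
  have := Submodule.finrank_mono hW'A
  have : finrank K A = _ := M.mulVecLin.finrank_comap_eq_of_le_range hW
  have := A.finrank_dotOrthogonal_add
  have := M.mulVecLin.finrank_range_add_finrank_ker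
  rw [Module.finrank_fintype_fun_eq_card] at *
  rw [rank]
  omega

lemma IsAlt.finrank_comap_wedge_le_finrank_inf_range_add_one {M : Matrix ι ι K} (hM : M.IsAlt)
    {D : Submodule K (Matrix ι ι K)} (hmax : ∀ N ∈ D, (M + N).rank ≤ M.rank) {c : ι → K}
    (hc : c ∉ LinearMap.range M.mulVecLin) :
    finrank K (D.comap (wedge c)) ≤
      finrank K ↥(D.comap (wedge c) ⊓ LinearMap.range M.mulVecLin) + 1 := by
  set V := D.comap (wedge c)
  set R := LinearMap.range M.mulVecLin
  have hV : V ⊔ R ≤ R ⊔ K ∙ c := by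
    refine sup_le (fun w hw => ?_) le_sup_left
    by_contra hw'
    exact (hmax _ hw).not_gt (hM.rank_lt_rank_add_wedge hc hw')
  have := Submodule.finrank_mono hV
  have := Submodule.finrank_sup_add_finrank_inf_eq V R
  rw [Submodule.finrank_sup_span_singleton hc] at *
  omega

theorem IsAlt.two_mul_le_rank_of_maximal {M : Matrix ι ι K} (hM : M.IsAlt)
    {D : Submodule K (Matrix ι ι K)} (hmax : ∀ N ∈ D, (M + N).rank ≤ M.rank) {s : ℕ}
    (hs : 2 * s ≤ Fintype.card ι)
    (hD : ∀ c : ι → K, c ≠ 0 → s < finrank K (D.comap (wedge c))) :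
    2 * s ≤ M.rank := by
  set R := LinearMap.range M.mulVecLin
  by_contra! hlt
  have hr : M.rank + 2 ≤ Fintype.card ι := by
    obtain ⟨k, hk⟩ := hM.even_rank
    omega
  have hR : finrank K R = M.rank := rfl
  have hcard : finrank K (ι → K) = Fintype.card ι := Module.finrank_fintype_fun_eq_card K
  obtain ⟨c, hc⟩ := R.exists_notMem_of_finrank_lt (by omega)
  obtain ⟨c', hc'⟩ := (R ⊔ K ∙ c).exists_notMem_of_finrank_lt
    (by rw [Submodule.finrank_sup_span_singleton hc]; omega)
  have hW (x : ι → K) (hx : x ∉ R) : s ≤ finrank K ↥(D.comap (wedge x) ⊓ R) := by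
    have h₁ := hD x (fun h => hx (h ▸ R.zero_mem))
    have h₂ : finrank K ↥(D.comap (wedge x)) ≤ finrank K ↥(D.comap (wedge x) ⊓ R) + 1 :=
      hM.finrank_comap_wedge_le_finrank_inf_range_add_one hmax hx
    omega
  have horth (a a' : ι → K) (ha : M *ᵥ a ∈ D.comap (wedge c) ⊓ R)
      (ha' : M *ᵥ a' ∈ D.comap (wedge c') ⊓ R) : a ⬝ᵥ M *ᵥ a' = 0 := by
    by_contra haa'
    have := hmax _ (D.add_mem ha.1 ha'.1)
    rw [← add_assoc] at this
    exact this.not_gt (hM.rank_lt_rank_add_wedge_add_wedge hc hc' haa')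
  have : finrank K ↥(D.comap (wedge c) ⊓ R) + finrank K ↥(D.comap (wedge c') ⊓ R) ≤ M.rank :=
    M.finrank_add_finrank_le_rank inf_le_right inf_le_right horth
  have := hW c hc
  have := hW c' fun h => hc' (Submodule.mem_sup_left h)
  omega

end Matrix

lemma finrank_matHyp_ker_lt_finrank_comap_wedge {K : Type*} [Field K] {n : ℕ}
    {D : Submodule K (Matrix (Fin n) (Fin n) K)} (hD : ∀ N ∈ D, N.IsAlt) {c : Fin n → K}
    (hc : c ≠ 0) :
    finrank K (matHyp D (LinearMap.ker (dotProductBilin K K c))) <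
      finrank K (D.comap (wedge c)) := by
  obtain ⟨e, he⟩ := exists_dotProduct_eq_one hc
  have hle : matHyp D (LinearMap.ker (dotProductBilin K K c)) ≤
      (D.comap (wedge c)).map (wedge c) := by
    rintro N ⟨hND, hNH⟩
    have hN := (hD N hND).eq_wedge he fun x y hx hy =>
      hNH x (by simpa using hx) y (by simpa using hy)
    exact ⟨-(N *ᵥ e), show wedge c _ ∈ D by rwa [← hN], hN.symm⟩
  exact (Submodule.finrank_mono hle).trans_lt
    (Submodule.finrank_map_lt_of_mem_ker_s9 (by simp [D.zero_mem]) hc (wedge_self c))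

/-- Over an arbitrary field: if `𝒮` is a nonempty affine subspace of alternating
`n × n` matrices whose direction `S` satisfies `dim S_H ≥ s` for every linear
hyperplane `H` of `Kⁿ`, then `𝒮` contains a matrix of rank at least `2s`. -/
theorem stmt9 {K : Type*} [Field K] (n s : ℕ) (hs : 2 * s ≤ n)
    (𝒮 : AffineSubspace K (Matrix (Fin n) (Fin n) K))
    (hne : (𝒮 : Set (Matrix (Fin n) (Fin n) K)).Nonempty)
    (halt : ∀ M ∈ 𝒮, ∀ X : Fin n → K, X ⬝ᵥ M *ᵥ X = 0)
    (hdim : ∀ H : Submodule K (Fin n → K), IsCoatom H →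
      s ≤ Module.finrank K (matHyp 𝒮.direction H)) :
    ∃ M ∈ 𝒮, 2 * s ≤ M.rank := by
  obtain ⟨M₀, hM₀⟩ := hne
  have hDalt (N) (hN : N ∈ 𝒮.direction) : N.IsAlt := fun x => by
    have := halt _ (𝒮.vadd_mem_of_mem_direction hN hM₀) x
    rwa [vadd_eq_add, add_mulVec, dotProduct_add, halt M₀ hM₀ x, add_zero] at this
  have hbdd : BddAbove (Matrix.rank '' (𝒮 : Set (Matrix (Fin n) (Fin n) K))) :=
    ⟨n, by rintro _ ⟨P, -, rfl⟩; exact P.rank_le_width⟩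
  obtain ⟨_, ⟨M, hM, rfl⟩, hmax⟩ := hbdd.exists_isGreatest_of_nonempty ⟨_, M₀, hM₀, rfl⟩
  refine ⟨M, hM, IsAlt.two_mul_le_rank_of_maximal (halt M hM) (D := 𝒮.direction)
    (fun N hN => ?_) (by simpa using hs) fun c hc => ?_⟩
  · exact hmax ⟨_, by simpa [add_comm] using 𝒮.vadd_mem_of_mem_direction hN hM, rfl⟩
  · exact (hdim _ (isCoatom_ker_dotProductBilin hc)).trans_lt
      (finrank_matHyp_ker_lt_finrank_comap_wedge hDalt hc)
end
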